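/- arXiv:2506.11539 — 12 statements merged into one kernel-verified Lean document; each statement's English description precedes it below -/
import Mathlib

section
/- Let (A_a) be a POVM on ℂ^d with every effect nonzero. Then for every d×d complex matrix X, the scaled-frame quadratic form satisfies Q_A(X) = ∑_a |Tr(A_a X)|² / Tr(A_a) ≤ Tr(XᴴX). In particular every eigenvalue of the scaled frame operator lies in [0,1]. -/
open Matrix
open scoped ComplexOrder

lemma trace_conjTranspose_mul_self_re {d : ℕ} (B : Matrix (Fin d) (Fin d) ℂ) :
    ((Bᴴ * B).trace).re = ∑ i, ∑ j, ‖B j i‖ ^ 2 := by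
  simp [Matrix.trace, Matrix.diag, Matrix.mul_apply, Complex.re_sum, ← Complex.normSq_eq_norm_sq,
    Complex.normSq_apply, Matrix.conjTranspose_apply, Complex.mul_re]

lemma key_cs {d : ℕ} (B X : Matrix (Fin d) (Fin d) ℂ) (hB : Bᴴ = B) :
    ‖(B * B * X).trace‖ ^ 2 ≤ ((Bᴴ * B).trace).re * (((B * X)ᴴ * (B * X)).trace).re := by
  set u : EuclideanSpace ℂ (Fin d × Fin d) := WithLp.toLp 2 (fun p : Fin d × Fin d => B p.2 p.1) with hu
  set v : EuclideanSpace ℂ (Fin d × Fin d) := WithLp.toLp 2 (fun p : Fin d × Fin d => (B * X) p.2 p.1) with hv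
  have hinner : (inner ℂ u v : ℂ) = (B * (B * X)).trace := by
    simp only [PiLp.inner_apply, RCLike.inner_apply, hu, hv, PiLp.toLp_apply]
    rw [Matrix.trace, Fintype.sum_prod_type]
    simp only [Matrix.diag, Matrix.mul_apply]
    congr 1; ext i; congr 1; ext j
    have h1 : (starRingEnd ℂ) (B j i) = B i j := by
      conv_rhs => rw [← hB]
      simp [Matrix.conjTranspose_apply]
    rw [h1, mul_comm]
  have huu : ‖u‖ ^ 2 = ((Bᴴ * B).trace).re := by
    rw [trace_conjTranspose_mul_self_re, ← Fintype.sum_prod_type']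
    rw [EuclideanSpace.norm_eq, Real.sq_sqrt (by positivity)]
  have hvv : ‖v‖ ^ 2 = (((B * X)ᴴ * (B * X)).trace).re := by
    rw [trace_conjTranspose_mul_self_re, ← Fintype.sum_prod_type']
    rw [EuclideanSpace.norm_eq, Real.sq_sqrt (by positivity)]
  calc ‖(B * B * X).trace‖ ^ 2 = ‖(inner ℂ u v : ℂ)‖ ^ 2 := by rw [hinner, mul_assoc]
    _ ≤ (‖u‖ * ‖v‖) ^ 2 := by
        gcongr
        exact norm_inner_le_norm u v
    _ = _ := by rw [mul_pow, huu, hvv]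

/-- For a POVM `(A_a)` on `ℂ^d` with nonzero effects, the scaled-frame
quadratic form `Q_A(X) = ∑_a |Tr(A_a X)|² / Tr(A_a)` satisfies `0 ≤ Q_A(X) ≤ Tr(XᴴX)`
for every `d × d` complex matrix `X`; in particular every eigenvalue of the scaled frame
operator lies in `[0, 1]`. -/
theorem scaled_frame_quadratic_form_le {d : ℕ} {α : Type*} [Fintype α]
    (A : α → Matrix (Fin d) (Fin d) ℂ)
    (hpsd : ∀ a, (A a).PosSemidef) (hsum : ∑ a, A a = 1) (hne : ∀ a, A a ≠ 0)
    (X : Matrix (Fin d) (Fin d) ℂ) :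
    0 ≤ ∑ a, ‖(A a * X).trace‖ ^ 2 / ((A a).trace.re) ∧
    ∑ a, ‖(A a * X).trace‖ ^ 2 / ((A a).trace.re) ≤ ((Xᴴ * X).trace).re := by
  have htr : ∀ a, 0 < ((A a).trace).re := by
    intro a
    obtain ⟨B, hB, hBB⟩ : ∃ B : Matrix (Fin d) (Fin d) ℂ, Bᴴ = B ∧ B * B = A a := by
      open scoped MatrixOrder in
      exact ⟨CFC.sqrt (A a), (CFC.sqrt_nonneg (A a)).posSemidef.1,
        CFC.sqrt_mul_sqrt_self (A a) (hpsd a).nonneg⟩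
    have heq : ((A a).trace).re = ∑ i, ∑ j, ‖B j i‖ ^ 2 := by
      rw [← hBB, ← trace_conjTranspose_mul_self_re, hB]
    rw [heq]
    have hnn : (0:ℝ) ≤ ∑ i, ∑ j, ‖B j i‖ ^ 2 :=
      Finset.sum_nonneg (fun i _ => Finset.sum_nonneg fun j _ => sq_nonneg _)
    rcases lt_or_eq_of_le hnn with h | h
    · exact h
    · exfalso
      apply hne a
      rw [← hBB]
      have hB0 : B = 0 := by
        ext i j
        have h1 := (Finset.sum_eq_zero_iff_of_nonneg
          (fun i _ => Finset.sum_nonneg fun j _ => sq_nonneg (‖B j i‖))).mp h.symm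
        have h2 := (Finset.sum_eq_zero_iff_of_nonneg (fun k _ => sq_nonneg (‖B k j‖))).mp
          (h1 j (Finset.mem_univ j)) i (Finset.mem_univ i)
        simpa using pow_eq_zero_iff (n := 2) (by norm_num) |>.mp h2
      rw [hB0, mul_zero]
  have hterm : ∀ a, ‖(A a * X).trace‖ ^ 2 / ((A a).trace).re
      ≤ ((Xᴴ * (A a) * X).trace).re := by
    intro a
    obtain ⟨B, hB, hBB⟩ : ∃ B : Matrix (Fin d) (Fin d) ℂ, Bᴴ = B ∧ B * B = A a := by
      open scoped MatrixOrder in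
      exact ⟨CFC.sqrt (A a), (CFC.sqrt_nonneg (A a)).posSemidef.1,
        CFC.sqrt_mul_sqrt_self (A a) (hpsd a).nonneg⟩
    have hcs := key_cs B X hB
    have e1 : B * B * X = A a * X := by rw [hBB]
    have e2 : (B * X)ᴴ * (B * X) = Xᴴ * (A a) * X := by
      rw [Matrix.conjTranspose_mul, hB]
      conv_rhs => rw [← hBB]
      simp only [Matrix.mul_assoc]
    have e3 : (Bᴴ * B).trace = (A a).trace := by rw [hB, hBB]
    rw [e1, e2, e3] at hcs
    rw [div_le_iff₀ (htr a)]
    nlinarith [htr a, hcs]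
  constructor
  · exact Finset.sum_nonneg fun a _ => div_nonneg (sq_nonneg _) (htr a).le
  · calc ∑ a, ‖(A a * X).trace‖ ^ 2 / ((A a).trace).re
        ≤ ∑ a, ((Xᴴ * (A a) * X).trace).re := Finset.sum_le_sum fun a _ => hterm a
      _ = ((Xᴴ * X).trace).re := by
          rw [← Complex.re_sum, ← Matrix.trace_sum]
          congr 2
          simp only [Matrix.mul_assoc]
          rw [← Finset.mul_sum, ← Finset.sum_mul, hsum, one_mul]
end

section
/- Let (A_a) be an informationally complete POVM on ℂ^d with every effect nonzero. Then for a d×d complex matrix X, equality Q_A(X) = Tr(XᴴX) holds if and only if X is a scalar multiple of the identity matrix. In particular Q_A(1) = d, so 1 is the maximal eigenvalue of the scaled frame operator, with the identity as eigenvector. -/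
open Matrix
open scoped ComplexOrder

namespace SFAux

variable {d : ℕ} {α : Type*} [Fintype α]

lemma trace_ct (B : Matrix (Fin d) (Fin d) ℂ) :
    (Bᴴ * B).trace = ((∑ j, ∑ i, Complex.normSq (B i j) : ℝ) : ℂ) := by
  push_cast
  simp [Matrix.trace, Matrix.diag, Matrix.mul_apply, Complex.normSq_eq_conj_mul_self]

lemma sum_normSq_zero {B : Matrix (Fin d) (Fin d) ℂ}
    (h : (∑ j, ∑ i, Complex.normSq (B i j) : ℝ) = 0) : B = 0 := by
  ext i j
  have h1 := (Finset.sum_eq_zero_iff_of_nonneg (fun j _ =>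
    Finset.sum_nonneg fun i _ => Complex.normSq_nonneg _)).mp h j (Finset.mem_univ _)
  have h2 := (Finset.sum_eq_zero_iff_of_nonneg (fun i _ =>
    Complex.normSq_nonneg _)).mp h1 i (Finset.mem_univ _)
  simpa using Complex.normSq_eq_zero.mp h2

lemma trace_ct_exists (B : Matrix (Fin d) (Fin d) ℂ) :
    ∃ g : ℝ, 0 ≤ g ∧ (Bᴴ * B).trace = (g : ℂ) ∧ (g = 0 → B = 0) :=
  ⟨∑ j, ∑ i, Complex.normSq (B i j),
    Finset.sum_nonneg fun _ _ => Finset.sum_nonneg fun _ _ => Complex.normSq_nonneg _,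
    trace_ct B, sum_normSq_zero⟩

lemma psd_eq_ct_mul {P : Matrix (Fin d) (Fin d) ℂ} (hP : P.PosSemidef) :
    ∃ B : Matrix (Fin d) (Fin d) ℂ, P = Bᴴ * B := by
  open scoped MatrixOrder Matrix.Norms.L2Operator in
  obtain ⟨B, hB⟩ := CStarAlgebra.nonneg_iff_eq_star_mul_self.mp hP.nonneg
  exact ⟨B, hB⟩

lemma psd_trace_exists {P : Matrix (Fin d) (Fin d) ℂ} (hP : P.PosSemidef) :
    ∃ g : ℝ, 0 ≤ g ∧ P.trace = (g : ℂ) ∧ (g = 0 → P = 0) := by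
  obtain ⟨B, rfl⟩ := psd_eq_ct_mul hP
  obtain ⟨g, hg0, hgt, hgz⟩ := trace_ct_exists B
  exact ⟨g, hg0, hgt, fun h => by rw [hgz h]; simp⟩

lemma psd_mul_trace {P Q : Matrix (Fin d) (Fin d) ℂ} (hP : P.PosSemidef) (hQ : Q.PosSemidef) :
    ∃ g : ℝ, 0 ≤ g ∧ (P * Q).trace = (g : ℂ) ∧ (g = 0 → P * Q = 0) := by
  obtain ⟨B, rfl⟩ := psd_eq_ct_mul hP
  obtain ⟨C, rfl⟩ := psd_eq_ct_mul hQ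
  obtain ⟨g, hg0, hgt, hgz⟩ := trace_ct_exists (B * Cᴴ)
  refine ⟨g, hg0, ?_, fun h => ?_⟩
  · rw [← hgt]
    have : (B * Cᴴ)ᴴ * (B * Cᴴ) = C * (Bᴴ * B * Cᴴ) := by
      simp [Matrix.mul_assoc]
    rw [this, Matrix.trace_mul_comm C (Bᴴ * B * Cᴴ)]
    simp [Matrix.mul_assoc]
  · have hz : B * Cᴴ = 0 := hgz h
    calc Bᴴ * B * (Cᴴ * C) = Bᴴ * (B * Cᴴ) * C := by simp [Matrix.mul_assoc]
    _ = 0 := by rw [hz]; simp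

lemma psd_sandwich {P : Matrix (Fin d) (Fin d) ℂ} (hP : P.PosSemidef)
    (Y : Matrix (Fin d) (Fin d) ℂ) :
    ∃ g : ℝ, 0 ≤ g ∧ (Yᴴ * P * Y).trace = (g : ℂ) ∧ (g = 0 → P * Y = 0) := by
  obtain ⟨B, rfl⟩ := psd_eq_ct_mul hP
  obtain ⟨g, hg0, hgt, hgz⟩ := trace_ct_exists (B * Y)
  refine ⟨g, hg0, ?_, fun h => ?_⟩
  · rw [← hgt]
    congr 1
    simp [Matrix.mul_assoc, Matrix.conjTranspose_mul]
  · have hz : B * Y = 0 := hgz h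
    calc Bᴴ * B * Y = Bᴴ * (B * Y) := by simp [Matrix.mul_assoc]
    _ = 0 := by rw [hz]; simp

omit [Fintype α] in
lemma span_sandwich (A : α → Matrix (Fin d) (Fin d) ℂ)
    (hic : Submodule.span ℂ (Set.range A) = ⊤)
    (P Q : Matrix (Fin d) (Fin d) ℂ) (h : ∀ a, Q * A a * P = 0) :
    ∀ M : Matrix (Fin d) (Fin d) ℂ, Q * M * P = 0 := by
  intro M
  have hM : M ∈ Submodule.span ℂ (Set.range A) := hic ▸ Submodule.mem_top
  induction hM using Submodule.span_induction with
  | mem x hx => obtain ⟨a, rfl⟩ := hx; exact h a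
  | zero => simp
  | add x y _ _ hx hy => rw [Matrix.mul_add, Matrix.add_mul, hx, hy]; simp
  | smul c x _ hx => rw [Matrix.mul_smul, Matrix.smul_mul, hx]; simp

lemma sandwich_all_zero {P Q : Matrix (Fin d) (Fin d) ℂ}
    (h : ∀ M : Matrix (Fin d) (Fin d) ℂ, Q * M * P = 0) (hQ : Q ≠ 0) : P = 0 := by
  by_contra hP
  obtain ⟨k, i, hki⟩ : ∃ k i, Q k i ≠ 0 := by
    by_contra hc; push_neg at hc; exact hQ (by ext k i; simpa using hc k i)
  obtain ⟨j, l, hjl⟩ : ∃ j l, P j l ≠ 0 := by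
    by_contra hc; push_neg at hc; exact hP (by ext j l; simpa using hc j l)
  have he := congrFun (congrFun (h (Matrix.single i j 1)) k) l
  rw [Matrix.mul_apply, Finset.sum_eq_single j (fun b _ hb => by
    rw [show (Q * Matrix.single i j (1 : ℂ)) k b = 0 from Matrix.mul_single_apply_of_ne _ _ _ _ _ hb _]; ring) (by simp)] at he
  rw [show (Q * Matrix.single i j (1 : ℂ)) k j = Q k i * 1 from Matrix.mul_single_apply_same _ _ _ _ _] at he
  simp only [Matrix.zero_apply, mul_one] at he
  exact hki (by
    rcases mul_eq_zero.mp he with h1 | h1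
    · exact h1
    · exact absurd h1 hjl)

lemma gap_expand (Aa X : Matrix (Fin d) (Fin d) ℂ) (hH : Aaᴴ = Aa) (r : ℝ) (hr : 0 < r)
    (htr : Aa.trace = (r : ℂ)) :
    ((X - ((Aa * X).trace / (r : ℂ)) • 1)ᴴ * Aa * (X - ((Aa * X).trace / (r : ℂ)) • 1)).trace
      = (Xᴴ * Aa * X).trace - ((‖(Aa * X).trace‖ ^ 2 / r : ℝ) : ℂ) := by
  set τ := (Aa * X).trace with hτ
  set c : ℂ := τ / (r : ℂ) with hc
  have hXH : (X - c • 1)ᴴ = Xᴴ - (starRingEnd ℂ c) • 1 := by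
    simp [Matrix.conjTranspose_sub, Matrix.conjTranspose_smul]
  have expand : (X - c • 1)ᴴ * Aa * (X - c • 1)
      = Xᴴ * Aa * X - c • (Xᴴ * Aa) - (starRingEnd ℂ c) • (Aa * X)
        + (starRingEnd ℂ c * c) • Aa := by
    rw [hXH]
    simp only [Matrix.sub_mul, Matrix.mul_sub, Matrix.smul_mul, Matrix.mul_smul,
      Matrix.one_mul, Matrix.mul_one, smul_smul]
    module
  rw [expand]
  have htrXA : (Xᴴ * Aa).trace = starRingEnd ℂ τ := by
    have : Xᴴ * Aa = (Aa * X)ᴴ := by rw [Matrix.conjTranspose_mul, hH]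
    rw [this, Matrix.trace_conjTranspose]
    rfl
  rw [Matrix.trace_add, Matrix.trace_sub, Matrix.trace_sub, Matrix.trace_smul,
    Matrix.trace_smul, Matrix.trace_smul, htrXA, htr, hτ]
  have hrne : (r : ℂ) ≠ 0 := by exact_mod_cast hr.ne'
  have hnorm : ((‖τ‖ ^ 2 : ℝ) : ℂ) = τ * starRingEnd ℂ τ := by
    rw [Complex.mul_conj]
    norm_cast
    rw [Complex.sq_norm]
  rw [hc, map_div₀]
  simp only [Complex.conj_ofReal, smul_eq_mul, Complex.ofReal_div]
  rw [hnorm]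
  field_simp
  ring

end SFAux

/-- For an informationally complete POVM `(A_a)` on `ℂ^d` with nonzero
effects, the scaled-frame quadratic form `Q_A(X) = ∑_a |Tr(A_a X)|² / Tr(A_a)` equals
`Tr(XᴴX)` if and only if `X` is a scalar multiple of the identity.  In particular
`Q_A(1) = d`, so `1` is the maximal eigenvalue of the scaled frame operator, with the
identity as eigenvector. -/
theorem scaled_frame_equality_iff_scalar {d : ℕ} {α : Type*} [Fintype α]
    (A : α → Matrix (Fin d) (Fin d) ℂ)
    (hpsd : ∀ a, (A a).PosSemidef) (hsum : ∑ a, A a = 1) (hne : ∀ a, A a ≠ 0)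
    (hic : Submodule.span ℂ (Set.range A) = ⊤) :
    (∀ X : Matrix (Fin d) (Fin d) ℂ,
      ∑ a, ‖(A a * X).trace‖ ^ 2 / ((A a).trace.re) = ((Xᴴ * X).trace).re ↔
        ∃ c : ℂ, X = c • (1 : Matrix (Fin d) (Fin d) ℂ)) ∧
    ∑ a, ‖(A a * (1 : Matrix (Fin d) (Fin d) ℂ)).trace‖ ^ 2 / ((A a).trace.re) = d := by
  classical
  have hrex : ∀ a, ∃ g : ℝ, 0 < g ∧ (A a).trace = (g : ℂ) := by
    intro a
    obtain ⟨g, hg0, hgt, hgz⟩ := SFAux.psd_trace_exists (hpsd a)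
    exact ⟨g, lt_of_le_of_ne hg0 (fun h => hne a (hgz h.symm)), hgt⟩
  choose r hrpos hrtr using hrex
  have hre : ∀ a, (A a).trace.re = r a := fun a => by rw [hrtr a, Complex.ofReal_re]
  have hrne : ∀ a, (r a : ℂ) ≠ 0 := fun a => by exact_mod_cast (hrpos a).ne'
  have hsumr : ∑ a, r a = (d : ℝ) := by
    have h1 : ∑ a, (A a).trace = (d : ℂ) := by
      rw [← Matrix.trace_sum, hsum, Matrix.trace_one]; simp
    have h2 : ((∑ a, r a : ℝ) : ℂ) = ((d : ℝ) : ℂ) := by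
      push_cast
      rw [← h1]
      exact Finset.sum_congr rfl fun a _ => (hrtr a).symm
    exact_mod_cast h2
  -- value of the quadratic form on scalar multiples of the identity
  have hval : ∀ c : ℂ,
      ∑ a, ‖(A a * (c • (1 : Matrix (Fin d) (Fin d) ℂ))).trace‖ ^ 2 / ((A a).trace.re)
        = ‖c‖ ^ 2 * d := by
    intro c
    have hterm : ∀ a, ‖(A a * (c • (1 : Matrix (Fin d) (Fin d) ℂ))).trace‖ ^ 2
        / ((A a).trace.re) = ‖c‖ ^ 2 * r a := by
      intro a
      rw [Matrix.mul_smul, Matrix.mul_one, Matrix.trace_smul, hre a, hrtr a, smul_eq_mul,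
        norm_mul, Complex.norm_real, Real.norm_eq_abs, abs_of_pos (hrpos a), mul_pow,
        mul_div_assoc, sq (r a), mul_div_assoc, div_self (hrpos a).ne', mul_one]
    rw [Finset.sum_congr rfl fun a _ => hterm a, ← Finset.mul_sum, hsumr]
  refine ⟨fun X => ⟨fun hQ => ?_, ?_⟩, ?_⟩
  · -- forward direction
    obtain ⟨μ, hμdef⟩ : ∃ μ : α → ℂ, μ = fun a => (A a * X).trace / (r a : ℂ) := ⟨_, rfl⟩
    have hgap : ∀ a, ∃ g : ℝ, 0 ≤ g ∧
        (g : ℂ) = (Xᴴ * A a * X).trace - ((‖(A a * X).trace‖ ^ 2 / r a : ℝ) : ℂ) ∧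
        (g = 0 → A a * (X - μ a • 1) = 0) := by
      intro a
      obtain ⟨g, hg0, hgt, hgz⟩ := SFAux.psd_sandwich (hpsd a) (X - μ a • 1)
      refine ⟨g, hg0, ?_, hgz⟩
      rw [← hgt]
      simp only [hμdef]
      exact SFAux.gap_expand (A a) X (hpsd a).1 (r a) (hrpos a) (hrtr a)
    choose g hg0 hgt hgz using hgap
    obtain ⟨G, hG0, hGt, _⟩ := SFAux.trace_ct_exists X
    have hsumXAX : ∑ a, (Xᴴ * A a * X).trace = ((G : ℝ) : ℂ) := by
      rw [← Matrix.trace_sum, ← hGt]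
      congr 1
      calc ∑ a, Xᴴ * A a * X = (∑ a, Xᴴ * A a) * X := (Finset.sum_mul _ _ _).symm
      _ = (Xᴴ * ∑ a, A a) * X := by rw [Finset.mul_sum]
      _ = Xᴴ * X := by rw [hsum, Matrix.mul_one]
    have hQr : ∑ a, ‖(A a * X).trace‖ ^ 2 / r a = G := by
      have := hQ
      rw [Finset.sum_congr rfl (fun a _ => by rw [hre a]), hGt, Complex.ofReal_re] at this
      exact this
    have hgsum : ∑ a, g a = 0 := by
      have hC : ((∑ a, g a : ℝ) : ℂ) = ((0 : ℝ) : ℂ) := by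
        push_cast
        rw [Finset.sum_congr rfl fun a _ => hgt a, Finset.sum_sub_distrib, hsumXAX]
        have : ∑ a, ((‖(A a * X).trace‖ ^ 2 / r a : ℝ) : ℂ) = ((G : ℝ) : ℂ) := by
          rw [← Complex.ofReal_sum, hQr]
        rw [this]
        ring
      exact_mod_cast hC
    have hgz0 : ∀ a, g a = 0 := fun a =>
      (Finset.sum_eq_zero_iff_of_nonneg fun a _ => hg0 a).mp hgsum a (Finset.mem_univ a)
    have hAX : ∀ a, A a * X = μ a • A a := by
      intro a
      have h := hgz a (hgz0 a)
      rw [Matrix.mul_sub, Matrix.mul_smul, Matrix.mul_one, sub_eq_zero] at h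
      exact h
    have hXsum : X = ∑ a, μ a • A a := by
      calc X = (∑ a, A a) * X := by rw [hsum, Matrix.one_mul]
      _ = ∑ a, A a * X := Finset.sum_mul _ _ _
      _ = ∑ a, μ a • A a := Finset.sum_congr rfl fun a _ => hAX a
    choose s hs0 hst hsz using fun (a b : α) => SFAux.psd_mul_trace (hpsd a) (hpsd b)
    have hssym : ∀ a b, s a b = s b a := by
      intro a b
      have : ((s a b : ℝ) : ℂ) = ((s b a : ℝ) : ℂ) := by
        rw [← hst, ← hst, Matrix.trace_mul_comm]
      exact_mod_cast this
    have hrs : ∀ a, ∑ b, s a b = r a := by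
      intro a
      have hC : ((∑ b, s a b : ℝ) : ℂ) = ((r a : ℝ) : ℂ) := by
        push_cast
        calc ∑ b, ((s a b : ℝ) : ℂ) = ∑ b, (A a * A b).trace :=
          Finset.sum_congr rfl fun b _ => (hst a b).symm
        _ = (A a * ∑ b, A b).trace := by rw [Finset.mul_sum, Matrix.trace_sum]
        _ = ((r a : ℝ) : ℂ) := by rw [hsum, Matrix.mul_one, hrtr a]
      exact_mod_cast hC
    have hτμ : ∀ a, (A a * X).trace = μ a * (r a : ℂ) := by
      intro a
      simp only [hμdef]
      rw [div_mul_cancel₀ _ (hrne a)]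
    have hXH : Xᴴ = ∑ a, (starRingEnd ℂ (μ a)) • A a := by
      calc Xᴴ = (∑ a, μ a • A a)ᴴ := by rw [← hXsum]
      _ = ∑ a, (starRingEnd ℂ (μ a)) • (A a)ᴴ := by
          rw [Matrix.conjTranspose_sum]
          exact Finset.sum_congr rfl fun a _ => Matrix.conjTranspose_smul _ _
      _ = ∑ a, (starRingEnd ℂ (μ a)) • A a :=
          Finset.sum_congr rfl fun a _ => by rw [(hpsd a).1]
    have hGdouble : ((G : ℝ) : ℂ)
        = ∑ a, ∑ b, (starRingEnd ℂ (μ a) * μ b) * ((s a b : ℝ) : ℂ) := by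
      rw [← hGt]
      calc (Xᴴ * X).trace = ((∑ a, (starRingEnd ℂ (μ a)) • A a) * (∑ b, μ b • A b)).trace := by
            rw [← hXH, ← hXsum]
      _ = ∑ a, ∑ b, (starRingEnd ℂ (μ a) * μ b) * (A a * A b).trace := by
            rw [Finset.sum_mul, Matrix.trace_sum]
            refine Finset.sum_congr rfl fun a _ => ?_
            rw [Finset.mul_sum, Matrix.trace_sum]
            refine Finset.sum_congr rfl fun b _ => ?_
            rw [Matrix.smul_mul, Matrix.mul_smul, smul_smul, Matrix.trace_smul, smul_eq_mul]
      _ = _ := Finset.sum_congr rfl fun a _ => Finset.sum_congr rfl fun b _ => by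
            rw [hst a b]
    have hGre : G = ∑ a, ∑ b, (starRingEnd ℂ (μ a) * μ b).re * s a b := by
      have hc := congrArg Complex.re hGdouble
      simpa [Complex.mul_re, Complex.ofReal_re, Complex.ofReal_im] using hc
    have hQμ : ∑ a, ‖(A a * X).trace‖ ^ 2 / r a = ∑ a, Complex.normSq (μ a) * r a := by
      refine Finset.sum_congr rfl fun a _ => ?_
      rw [hτμ a, norm_mul, Complex.norm_real, Real.norm_eq_abs, abs_of_pos (hrpos a), mul_pow,
        ← Complex.sq_norm,
        mul_div_assoc, sq (r a), mul_div_assoc, div_self (hrpos a).ne', mul_one]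
    have hE : ∑ a, ∑ b, Complex.normSq (μ a - μ b) * s a b = 0 := by
      have expand : ∀ a b, Complex.normSq (μ a - μ b) * s a b
          = Complex.normSq (μ a) * s a b + Complex.normSq (μ b) * s a b
            - 2 * ((starRingEnd ℂ (μ a) * μ b).re * s a b) := by
        intro a b
        rw [Complex.normSq_sub]
        have hre2 : (μ a * starRingEnd ℂ (μ b)).re = (starRingEnd ℂ (μ a) * μ b).re := by
          rw [← Complex.conj_re (μ a * starRingEnd ℂ (μ b)), _root_.map_mul, Complex.conj_conj]
        rw [hre2]
        ring
      rw [Finset.sum_congr rfl fun a _ => Finset.sum_congr rfl fun b _ => expand a b]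
      have h1 : ∑ a, ∑ b, Complex.normSq (μ a) * s a b = ∑ a, Complex.normSq (μ a) * r a := by
        refine Finset.sum_congr rfl fun a _ => ?_
        rw [← Finset.mul_sum, hrs a]
      have h2 : ∑ a, ∑ b, Complex.normSq (μ b) * s a b = ∑ a, Complex.normSq (μ a) * r a := by
        rw [Finset.sum_comm]
        refine Finset.sum_congr rfl fun b _ => ?_
        rw [← Finset.mul_sum, Finset.sum_congr rfl fun a _ => hssym a b, hrs b]
      simp only [Finset.sum_sub_distrib, Finset.sum_add_distrib, h1, h2, ← Finset.mul_sum, hrs]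
      rw [← hGre]
      have hQG : ∑ a, Complex.normSq (μ a) * r a = G := by rw [← hQμ, hQr]
      rw [hQG]
      ring
    have hterm0 : ∀ a b, Complex.normSq (μ a - μ b) * s a b = 0 := by
      intro a b
      have h1 := (Finset.sum_eq_zero_iff_of_nonneg (fun a _ =>
        Finset.sum_nonneg fun b _ =>
          mul_nonneg (Complex.normSq_nonneg _) (hs0 a b))).mp hE a (Finset.mem_univ a)
      exact (Finset.sum_eq_zero_iff_of_nonneg fun b _ =>
        mul_nonneg (Complex.normSq_nonneg _) (hs0 a b)).mp h1 b (Finset.mem_univ b)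
    have hmuAB : ∀ a b, μ a ≠ μ b → A a * A b = 0 := by
      intro a b hab
      apply hsz a b
      rcases mul_eq_zero.mp (hterm0 a b) with h | h
      · exact absurd (sub_eq_zero.mp (Complex.normSq_eq_zero.mp h)) hab
      · exact h
    rcases isEmpty_or_nonempty α with hα | hα
    · exact ⟨0, by rw [hXsum]; simp⟩
    obtain ⟨a0⟩ := hα
    have hall : ∀ b, μ b = μ a0 := by
      by_contra hc
      push_neg at hc
      obtain ⟨b0, hb0⟩ := hc
      set S : Finset α := Finset.univ.filter (fun a => μ a = μ a0) with hS
      have hsand : ∀ e, (∑ a ∈ Sᶜ, A a) * A e * (∑ a ∈ S, A a) = 0 := by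
        intro e
        by_cases he : μ e = μ a0
        · have hQe : (∑ a ∈ Sᶜ, A a) * A e = 0 := by
            rw [Finset.sum_mul]
            refine Finset.sum_eq_zero fun b hb => ?_
            have hbne : μ b ≠ μ a0 := by
              simpa [hS] using Finset.mem_compl.mp hb
            exact hmuAB b e (by rw [he]; exact hbne)
          rw [hQe, Matrix.zero_mul]
        · have hPe : A e * (∑ a ∈ S, A a) = 0 := by
            rw [Finset.mul_sum]
            refine Finset.sum_eq_zero fun b hb => ?_
            have hbeq : μ b = μ a0 := by simpa [hS] using hb
            exact hmuAB e b (by rw [hbeq]; exact he)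
          rw [Matrix.mul_assoc, hPe, Matrix.mul_zero]
      have hallM := SFAux.span_sandwich A hic (∑ a ∈ S, A a) (∑ a ∈ Sᶜ, A a) hsand
      have hsubpos : ∀ (T : Finset α), T.Nonempty → (∑ a ∈ T, A a) ≠ 0 := by
        intro T ⟨t, ht⟩ h0
        have htr : (∑ a ∈ T, A a).trace = ((∑ a ∈ T, r a : ℝ) : ℂ) := by
          rw [Matrix.trace_sum]
          push_cast
          exact Finset.sum_congr rfl fun a _ => hrtr a
        have hpos : 0 < ∑ a ∈ T, r a :=
          Finset.sum_pos' (fun i _ => (hrpos i).le) ⟨t, ht, hrpos t⟩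
        rw [h0, Matrix.trace_zero] at htr
        exact hpos.ne' (by exact_mod_cast htr.symm)
      have hP0 : (∑ a ∈ S, A a) ≠ 0 :=
        hsubpos S ⟨a0, by simp [hS]⟩
      have hQ0 : (∑ a ∈ Sᶜ, A a) ≠ 0 :=
        hsubpos Sᶜ ⟨b0, by simp [hS, hb0]⟩
      exact hP0 (SFAux.sandwich_all_zero hallM hQ0)
    refine ⟨μ a0, ?_⟩
    rw [hXsum, Finset.sum_congr rfl fun b _ => by rw [hall b], ← Finset.smul_sum, hsum]
  · -- backward direction
    rintro ⟨c, rfl⟩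
    rw [hval c]
    have hR : ((c • (1 : Matrix (Fin d) (Fin d) ℂ))ᴴ * (c • 1)).trace
        = ((‖c‖ ^ 2 * d : ℝ) : ℂ) := by
      rw [Matrix.conjTranspose_smul, Matrix.conjTranspose_one, Matrix.smul_mul,
        Matrix.mul_smul, Matrix.one_mul, smul_smul, Matrix.trace_smul, Matrix.trace_one,
        smul_eq_mul]
      have hnc : Complex.normSq c = ‖c‖ ^ 2 := by
        rw [← Complex.sq_norm]
      rw [Complex.star_def, mul_comm ((starRingEnd ℂ) c) c, Complex.mul_conj, hnc]
      push_cast [Fintype.card_fin]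
      ring
    rw [hR, Complex.ofReal_re]
  · -- the value at the identity
    have h1 : (1 : Matrix (Fin d) (Fin d) ℂ) = (1 : ℂ) • 1 := (one_smul _ _).symm
    rw [h1, hval 1]
    simp
end

section
/- Let (A_a)_{a∈α} and (B_b)_{b∈β} be POVMs on ℂ^d with all effects nonzero, and suppose (B_b) is a post-processing of (A_a). Then for every d×d complex matrix X, Q_B(X) ≤ Q_A(X), i.e. ∑_b |Tr(B_b X)|²/Tr(B_b) ≤ ∑_a |Tr(A_a X)|²/Tr(A_a). Hence, for each fixed X, the map A ↦ Q_A(X) is a resource monotone under classical post-processing. -/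
open Matrix
open scoped ComplexOrder

/-- The real part of the trace of a nonzero PSD complex matrix is positive. -/
lemma trace_re_pos_of_posSemidef {n : Type*} [Fintype n] [DecidableEq n]
    {A : Matrix n n ℂ} (hA : A.PosSemidef) (h : A ≠ 0) : 0 < A.trace.re := by
  obtain ⟨B, rfl⟩ : ∃ B : Matrix n n ℂ, A = Bᴴ * B := by
    open scoped MatrixOrder in
    exact CStarAlgebra.nonneg_iff_eq_star_mul_self.mp hA.nonneg
  have hB : B ≠ 0 := by
    rintro rfl; simp at h
  have htr : (Bᴴ * B).trace.re = ∑ i, ∑ j, ‖B j i‖ ^ 2 := by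
    simp only [Matrix.trace, Matrix.diag, Matrix.mul_apply, Matrix.conjTranspose_apply]
    rw [Complex.re_sum]
    refine Finset.sum_congr rfl fun i _ => ?_
    rw [Complex.re_sum]
    refine Finset.sum_congr rfl fun j _ => ?_
    simp [Complex.star_def, Complex.mul_re, Complex.sq_norm,
      Complex.normSq_apply]
  rw [htr]
  obtain ⟨j, i, hji⟩ : ∃ j i, B j i ≠ 0 := by
    by_contra hc
    push_neg at hc
    exact hB (by ext j i; simpa using hc j i)
  refine Finset.sum_pos' (fun i _ => Finset.sum_nonneg fun j _ => by positivity) ⟨i,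
    Finset.mem_univ _, Finset.sum_pos' (fun j _ => by positivity) ⟨j, Finset.mem_univ _, ?_⟩⟩
  exact pow_pos (norm_pos_iff.mpr hji) 2

/-- Cauchy–Schwarz key inequality. -/
lemma key_ineq {ι : Type*} [Fintype ι] (c t : ι → ℝ) (z : ι → ℂ)
    (hc : ∀ i, 0 ≤ c i) (ht : ∀ i, 0 < t i) :
    ‖∑ i, (c i : ℂ) * z i‖ ^ 2 / (∑ i, c i * t i) ≤ ∑ i, c i * (‖z i‖ ^ 2 / t i) := by
  have hRHS : 0 ≤ ∑ i, c i * (‖z i‖ ^ 2 / t i) :=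
    Finset.sum_nonneg fun i _ => mul_nonneg (hc i) (div_nonneg (by positivity) (ht i).le)
  have hS : 0 ≤ ∑ i, c i * t i :=
    Finset.sum_nonneg fun i _ => mul_nonneg (hc i) (ht i).le
  rcases hS.eq_or_lt with hS0 | hS0
  · rw [← hS0, div_zero]; exact hRHS
  rw [div_le_iff₀ hS0]
  have h1 : ‖∑ i, (c i : ℂ) * z i‖ ≤ ∑ i, c i * ‖z i‖ := by
    calc ‖∑ i, (c i : ℂ) * z i‖ ≤ ∑ i, ‖(c i : ℂ) * z i‖ := norm_sum_le _ _
    _ = ∑ i, c i * ‖z i‖ := by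
        refine Finset.sum_congr rfl fun i _ => ?_
        rw [norm_mul, Complex.norm_real, Real.norm_of_nonneg (hc i)]
  have h2 : (∑ i, c i * ‖z i‖) ^ 2 ≤ (∑ i, c i * t i) * ∑ i, c i * (‖z i‖ ^ 2 / t i) := by
    have := Finset.sum_mul_sq_le_sq_mul_sq Finset.univ
      (fun i => Real.sqrt (c i * t i)) (fun i => Real.sqrt (c i / t i) * ‖z i‖)
    have e1 : ∀ i : ι, Real.sqrt (c i * t i) * (Real.sqrt (c i / t i) * ‖z i‖)
        = c i * ‖z i‖ := by
      intro i
      rw [← mul_assoc, ← Real.sqrt_mul (mul_nonneg (hc i) (ht i).le)]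
      have h0 : t i ≠ 0 := (ht i).ne'
      have : c i * t i * (c i / t i) = (c i) ^ 2 := by
        field_simp
      rw [this, Real.sqrt_sq (hc i)]
    have e2 : ∀ i : ι, Real.sqrt (c i * t i) ^ 2 = c i * t i := fun i =>
      Real.sq_sqrt (mul_nonneg (hc i) (ht i).le)
    have e3 : ∀ i : ι, (Real.sqrt (c i / t i) * ‖z i‖) ^ 2 = c i * (‖z i‖ ^ 2 / t i) := by
      intro i
      rw [mul_pow, Real.sq_sqrt (div_nonneg (hc i) (ht i).le)]
      field_simp
    simp_rw [e1, e2, e3] at this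
    exact this
  calc ‖∑ i, (c i : ℂ) * z i‖ ^ 2 ≤ (∑ i, c i * ‖z i‖) ^ 2 := by
        apply pow_le_pow_left₀ (norm_nonneg _) h1
    _ ≤ (∑ i, c i * t i) * ∑ i, c i * (‖z i‖ ^ 2 / t i) := h2
    _ = (∑ i, c i * (‖z i‖ ^ 2 / t i)) * (∑ i, c i * t i) := mul_comm _ _

/-- If the POVM `(B_b)` is a classical post-processing of the POVM
`(A_a)` (both with nonzero effects), then for every `d × d` complex matrix `X` the
scaled-frame quadratic forms satisfy `Q_B(X) ≤ Q_A(X)`; i.e. `A ↦ Q_A(X)` is a resource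
monotone under classical post-processing. -/
theorem scaled_frame_quadratic_form_monotone {d : ℕ} {α β : Type*} [Fintype α] [Fintype β]
    (A : α → Matrix (Fin d) (Fin d) ℂ) (B : β → Matrix (Fin d) (Fin d) ℂ)
    (hApsd : ∀ a, (A a).PosSemidef) (hAsum : ∑ a, A a = 1) (hAne : ∀ a, A a ≠ 0)
    (hBpsd : ∀ b, (B b).PosSemidef) (hBsum : ∑ b, B b = 1) (hBne : ∀ b, B b ≠ 0)
    (μ : β → α → ℝ) (hμ0 : ∀ b a, 0 ≤ μ b a) (hμ1 : ∀ a, ∑ b, μ b a = 1)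
    (hpost : ∀ b, B b = ∑ a, (μ b a : ℂ) • A a)
    (X : Matrix (Fin d) (Fin d) ℂ) :
    ∑ b, ‖(B b * X).trace‖ ^ 2 / ((B b).trace.re) ≤
      ∑ a, ‖(A a * X).trace‖ ^ 2 / ((A a).trace.re) := by
  set t : α → ℝ := fun a => (A a).trace.re with ht_def
  set z : α → ℂ := fun a => (A a * X).trace with hz_def
  have ht : ∀ a, 0 < t a := fun a => trace_re_pos_of_posSemidef (hApsd a) (hAne a)
  have step : ∀ b, ‖(B b * X).trace‖ ^ 2 / ((B b).trace.re)
      ≤ ∑ a, μ b a * (‖z a‖ ^ 2 / t a) := by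
    intro b
    have e1 : (B b * X).trace = ∑ a, (μ b a : ℂ) * z a := by
      rw [hpost b, Finset.sum_mul, Matrix.trace_sum]
      exact Finset.sum_congr rfl fun a _ => by rw [Matrix.smul_mul, Matrix.trace_smul, smul_eq_mul]
    have e2 : (B b).trace.re = ∑ a, μ b a * t a := by
      rw [hpost b, Matrix.trace_sum, Complex.re_sum]
      exact Finset.sum_congr rfl fun a _ => by
        rw [Matrix.trace_smul, smul_eq_mul, Complex.re_ofReal_mul]
    rw [e1, e2]
    exact key_ineq (μ b) t z (hμ0 b) ht
  calc ∑ b, ‖(B b * X).trace‖ ^ 2 / ((B b).trace.re)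
      ≤ ∑ b, ∑ a, μ b a * (‖z a‖ ^ 2 / t a) := Finset.sum_le_sum fun b _ => step b
    _ = ∑ a, (∑ b, μ b a) * (‖z a‖ ^ 2 / t a) := by
        rw [Finset.sum_comm]
        exact Finset.sum_congr rfl fun a _ => (Finset.sum_mul _ _ _).symm
    _ = ∑ a, ‖(A a * X).trace‖ ^ 2 / ((A a).trace.re) := by
        refine Finset.sum_congr rfl fun a _ => ?_
        rw [hμ1 a, one_mul]
end

section
/- Let (A_a) and (B_b) be POVMs on ℂ^d with all effects nonzero, and suppose (B_b) is a post-processing of (A_a). Then the completeness stabilities satisfy s(B) ≤ s(A), where s(A) = inf { Q_A(X) : X a d×d complex matrix with Tr(XᴴX) = 1 }. That is, completeness stability is a resource monotone. -/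
open Matrix
open scoped ComplexOrder


lemma trace_re_pos_of_posSemidef_ne_zero {n : ℕ} {M : Matrix (Fin n) (Fin n) ℂ}
    (h : M.PosSemidef) (hM : M ≠ 0) : 0 < M.trace.re := by
  obtain ⟨B, rfl⟩ : ∃ B : Matrix (Fin n) (Fin n) ℂ, M = Bᴴ * B := by
    open scoped MatrixOrder in exact CStarAlgebra.nonneg_iff_eq_star_mul_self.mp h.nonneg
  have htr : (Bᴴ * B).trace.re = ∑ i, ∑ j, ‖B j i‖ ^ 2 := by
    simp only [Matrix.trace, Matrix.diag, Matrix.mul_apply, Matrix.conjTranspose_apply,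
      Complex.re_sum]
    refine Finset.sum_congr rfl fun i _ => Finset.sum_congr rfl fun j _ => ?_
    simp [Complex.star_def, ← Complex.normSq_eq_conj_mul_self, ← Complex.sq_norm]
    rw [← Complex.ofReal_pow, Complex.ofReal_re]
  rw [htr]
  have hB : B ≠ 0 := fun hc => hM (by rw [hc]; simp)
  obtain ⟨j, i, hij⟩ : ∃ j i, B j i ≠ 0 := by
    by_contra hc; push_neg at hc; exact hB (by ext j i; exact hc j i)
  have h1 : 0 < ‖B j i‖ ^ 2 := pow_pos (norm_pos_iff.mpr hij) 2
  have h2 : ‖B j i‖ ^ 2 ≤ ∑ j', ‖B j' i‖ ^ 2 :=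
    Finset.single_le_sum (f := fun j' => ‖B j' i‖ ^ 2) (fun _ _ => by positivity)
      (Finset.mem_univ j)
  have h3 : (∑ j', ‖B j' i‖ ^ 2) ≤ ∑ i', ∑ j', ‖B j' i'‖ ^ 2 :=
    Finset.single_le_sum (f := fun i' => ∑ j', ‖B j' i'‖ ^ 2)
      (fun _ _ => Finset.sum_nonneg fun _ _ => by positivity) (Finset.mem_univ i)
  linarith

lemma sqrt_helper (p t c : ℝ) (hp : 0 ≤ p) (ht : 0 < t) :
    Real.sqrt (p * t) * (Real.sqrt p * c / Real.sqrt t) = p * c := by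
  rw [Real.sqrt_mul hp]
  have h1 : Real.sqrt t ≠ 0 := ne_of_gt (Real.sqrt_pos.mpr ht)
  field_simp
  ring_nf
  rw [Real.sq_sqrt hp]
  ring

lemma sqrt_helper3 (p t c : ℝ) (hp : 0 ≤ p) (ht : 0 < t) :
    (Real.sqrt p * c / Real.sqrt t) ^ 2 = p * (c ^ 2 / t) := by
  rw [div_pow, mul_pow, Real.sq_sqrt hp, Real.sq_sqrt ht.le]
  ring

/-- Cauchy–Schwarz step: for weights `p a ≥ 0`, positive `t a`, and reals `c a ≥ 0`,
`(∑ p c)² ≤ (∑ p t) * (∑ p (c²/t))`. -/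
lemma cs_step {α : Type*} [Fintype α] (p t c : α → ℝ) (hp : ∀ a, 0 ≤ p a)
    (ht : ∀ a, 0 < t a) :
    (∑ a, p a * c a) ^ 2 ≤ (∑ a, p a * t a) * ∑ a, p a * (c a ^ 2 / t a) := by
  have := Finset.sum_mul_sq_le_sq_mul_sq Finset.univ
    (fun a => Real.sqrt (p a * t a)) (fun a => Real.sqrt (p a) * c a / Real.sqrt (t a))
  calc (∑ a, p a * c a) ^ 2
      = (∑ a, Real.sqrt (p a * t a) * (Real.sqrt (p a) * c a / Real.sqrt (t a))) ^ 2 := by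
        congr 1; exact Finset.sum_congr rfl fun a _ => (sqrt_helper _ _ _ (hp a) (ht a)).symm
    _ ≤ (∑ a, Real.sqrt (p a * t a) ^ 2) *
          ∑ a, (Real.sqrt (p a) * c a / Real.sqrt (t a)) ^ 2 := this
    _ = (∑ a, p a * t a) * ∑ a, p a * (c a ^ 2 / t a) := by
        congr 1
        · exact Finset.sum_congr rfl fun a _ => Real.sq_sqrt (mul_nonneg (hp a) (ht a).le)
        · exact Finset.sum_congr rfl fun a _ => sqrt_helper3 _ _ _ (hp a) (ht a)


/-- If the POVM `(B_b)` is a classical post-processing of the POVM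
`(A_a)` (both with nonzero effects), then the completeness stabilities satisfy
`s(B) ≤ s(A)`, where `s(A)` is the infimum of the scaled-frame quadratic form
`Q_A(X) = ∑_a |Tr(A_a X)|² / Tr(A_a)` over matrices `X` with `Tr(XᴴX) = 1`.
That is, completeness stability is a resource monotone. -/
theorem completeness_stability_monotone {d : ℕ} {α β : Type*} [Fintype α] [Fintype β]
    (A : α → Matrix (Fin d) (Fin d) ℂ) (B : β → Matrix (Fin d) (Fin d) ℂ)
    (hApsd : ∀ a, (A a).PosSemidef) (hAsum : ∑ a, A a = 1) (hAne : ∀ a, A a ≠ 0)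
    (hBpsd : ∀ b, (B b).PosSemidef) (hBsum : ∑ b, B b = 1) (hBne : ∀ b, B b ≠ 0)
    (μ : β → α → ℝ) (hμ0 : ∀ b a, 0 ≤ μ b a) (hμ1 : ∀ a, ∑ b, μ b a = 1)
    (hpost : ∀ b, B b = ∑ a, (μ b a : ℂ) • A a) :
    sInf {r : ℝ | ∃ X : Matrix (Fin d) (Fin d) ℂ, (Xᴴ * X).trace = 1 ∧
        r = ∑ b, ‖(B b * X).trace‖ ^ 2 / ((B b).trace.re)} ≤
      sInf {r : ℝ | ∃ X : Matrix (Fin d) (Fin d) ℂ, (Xᴴ * X).trace = 1 ∧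
        r = ∑ a, ‖(A a * X).trace‖ ^ 2 / ((A a).trace.re)} := by
  -- the key pointwise inequality
  have key : ∀ X : Matrix (Fin d) (Fin d) ℂ,
      (∑ b, ‖(B b * X).trace‖ ^ 2 / ((B b).trace.re)) ≤
        ∑ a, ‖(A a * X).trace‖ ^ 2 / ((A a).trace.re) := by
    intro X
    set t : α → ℝ := fun a => (A a).trace.re with ht_def
    set c : α → ℂ := fun a => (A a * X).trace with hc_def
    have ht : ∀ a, 0 < t a := fun a => trace_re_pos_of_posSemidef_ne_zero (hApsd a) (hAne a)
    have hBtrX : ∀ b, (B b * X).trace = ∑ a, (μ b a : ℂ) * c a := by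
      intro b
      rw [hpost b, Finset.sum_mul, Matrix.trace_sum]
      exact Finset.sum_congr rfl fun a _ => by rw [Matrix.smul_mul, Matrix.trace_smul]; simp [c]
    have hBtr : ∀ b, (B b).trace.re = ∑ a, μ b a * t a := by
      intro b
      rw [hpost b, Matrix.trace_sum, Complex.re_sum]
      exact Finset.sum_congr rfl fun a _ => by
        rw [Matrix.trace_smul]; simp [Complex.mul_re, t]
    have hbd : ∀ b, ‖(B b * X).trace‖ ^ 2 / ((B b).trace.re) ≤
        ∑ a, μ b a * (‖c a‖ ^ 2 / t a) := by
      intro b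
      have hT : 0 < (B b).trace.re :=
        trace_re_pos_of_posSemidef_ne_zero (hBpsd b) (hBne b)
      rw [div_le_iff₀ hT]
      have h1 : ‖(B b * X).trace‖ ≤ ∑ a, μ b a * ‖c a‖ := by
        rw [hBtrX b]
        refine (norm_sum_le _ _).trans_eq (Finset.sum_congr rfl fun a _ => ?_)
        rw [norm_mul, Complex.norm_real, Real.norm_of_nonneg (hμ0 b a)]
      have h2 : (∑ a, μ b a * ‖c a‖) ^ 2 ≤
          (∑ a, μ b a * t a) * ∑ a, μ b a * (‖c a‖ ^ 2 / t a) :=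
        cs_step (μ b) t (fun a => ‖c a‖) (hμ0 b) ht
      have h3 : ‖(B b * X).trace‖ ^ 2 ≤ (∑ a, μ b a * ‖c a‖) ^ 2 :=
        pow_le_pow_left₀ (norm_nonneg _) h1 2
      calc ‖(B b * X).trace‖ ^ 2 ≤
          (∑ a, μ b a * t a) * ∑ a, μ b a * (‖c a‖ ^ 2 / t a) := le_trans h3 h2
        _ = (∑ a, μ b a * (‖c a‖ ^ 2 / t a)) * (B b).trace.re := by rw [hBtr b]; ring
    calc (∑ b, ‖(B b * X).trace‖ ^ 2 / ((B b).trace.re))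
        ≤ ∑ b, ∑ a, μ b a * (‖c a‖ ^ 2 / t a) := Finset.sum_le_sum fun b _ => hbd b
      _ = ∑ a, (∑ b, μ b a) * (‖c a‖ ^ 2 / t a) := by
          rw [Finset.sum_comm]
          exact Finset.sum_congr rfl fun a _ => (Finset.sum_mul _ _ _).symm
      _ = ∑ a, ‖(A a * X).trace‖ ^ 2 / ((A a).trace.re) := by
          exact Finset.sum_congr rfl fun a _ => by rw [hμ1 a, one_mul]
  by_cases hX : ∃ X : Matrix (Fin d) (Fin d) ℂ, (Xᴴ * X).trace = 1
  · obtain ⟨X₀, hX₀⟩ := hX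
    have hbdd : BddBelow {r : ℝ | ∃ X : Matrix (Fin d) (Fin d) ℂ, (Xᴴ * X).trace = 1 ∧
        r = ∑ b, ‖(B b * X).trace‖ ^ 2 / ((B b).trace.re)} := by
      refine ⟨0, fun r hr => ?_⟩
      obtain ⟨X, -, rfl⟩ := hr
      refine Finset.sum_nonneg fun b _ => div_nonneg (by positivity) ?_
      exact (trace_re_pos_of_posSemidef_ne_zero (hBpsd b) (hBne b)).le
    refine le_csInf ⟨_, X₀, hX₀, rfl⟩ fun r hr => ?_
    obtain ⟨X, hX1, rfl⟩ := hr
    exact (csInf_le hbdd ⟨X, hX1, rfl⟩).trans (key X)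
  · have he : ∀ (f : Matrix (Fin d) (Fin d) ℂ → ℝ),
        {r : ℝ | ∃ X : Matrix (Fin d) (Fin d) ℂ, (Xᴴ * X).trace = 1 ∧ r = f X} = ∅ := by
      intro f
      ext r
      simp only [Set.mem_setOf_eq, Set.mem_empty_iff_false, iff_false]
      rintro ⟨X, hX1, -⟩
      exact hX ⟨X, hX1⟩
    rw [he, he, Real.sInf_empty]
end

section
/- Let (A_a) be a POVM on ℂ^d with every effect nonzero. Then ∑_a Tr(A_a²)/Tr(A_a) = d if and only if every effect A_a has rank one (equivalently, Tr(A_a²) = (Tr A_a)² for every a). -/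
open Matrix
open scoped ComplexOrder

private lemma trace_eq_sum_eigs {n : ℕ} {A : Matrix (Fin n) (Fin n) ℂ}
    (h : A.IsHermitian) : A.trace = ∑ i, (h.eigenvalues i : ℂ) := by
  conv_lhs => rw [h.spectral_theorem, Unitary.conjStarAlgAut_apply]
  rw [Matrix.trace_mul_cycle, Unitary.coe_star_mul_self, Matrix.one_mul, Matrix.trace_diagonal]
  rfl

private lemma trace_sq_eq_sum_eigs_sq {n : ℕ} {A : Matrix (Fin n) (Fin n) ℂ}
    (h : A.IsHermitian) : (A * A).trace = ∑ i, ((h.eigenvalues i : ℂ)) ^ 2 := by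
  have key : A * A = (h.eigenvectorUnitary : Matrix (Fin n) (Fin n) ℂ) *
      (Matrix.diagonal (RCLike.ofReal ∘ h.eigenvalues) *
        Matrix.diagonal (RCLike.ofReal ∘ h.eigenvalues)) *
      (star (h.eigenvectorUnitary : Matrix (Fin n) (Fin n) ℂ)) := by
    conv_lhs => rw [h.spectral_theorem, Unitary.conjStarAlgAut_apply]
    simp only [Matrix.mul_assoc]
    congr 2
    rw [← Matrix.mul_assoc, ← Matrix.mul_assoc, Unitary.coe_star_mul_self, Matrix.one_mul]
  rw [key, Matrix.trace_mul_cycle, Unitary.coe_star_mul_self, Matrix.one_mul,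
    Matrix.diagonal_mul_diagonal, Matrix.trace_diagonal]
  simp [sq]

private lemma eigs_zero_imp_zero {n : ℕ} {A : Matrix (Fin n) (Fin n) ℂ}
    (h : A.IsHermitian) (hz : ∀ i, h.eigenvalues i = 0) : A = 0 := by
  have := h.spectral_theorem
  have hd : Matrix.diagonal (RCLike.ofReal ∘ h.eigenvalues) = (0 : Matrix (Fin n) (Fin n) ℂ) := by
    ext i j
    by_cases hij : i = j <;> simp [Matrix.diagonal, hij, hz]
  rw [Unitary.conjStarAlgAut_apply, hd, Matrix.mul_zero, Matrix.zero_mul] at this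
  exact this

private lemma real_key {n : ℕ} (l : Fin n → ℝ) (hnn : ∀ i, 0 ≤ l i)
    (hs : 0 < ∑ i, l i) :
    (∑ i, (l i) ^ 2 ≤ (∑ i, l i) ^ 2) ∧
    (∑ i, (l i) ^ 2 = (∑ i, l i) ^ 2 ↔ Fintype.card {i // l i ≠ 0} = 1) := by
  set s := ∑ i, l i with hsdef
  have hle : ∀ i, l i ≤ s := fun i =>
    Finset.single_le_sum (fun j _ => hnn j) (Finset.mem_univ i)
  have hterm : ∀ i ∈ Finset.univ, 0 ≤ l i * (s - l i) := fun i _ =>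
    mul_nonneg (hnn i) (sub_nonneg.2 (hle i))
  have hkey : s ^ 2 - ∑ i, (l i) ^ 2 = ∑ i, l i * (s - l i) := by
    rw [Finset.sum_congr rfl (fun i _ => mul_sub (l i) s (l i)), Finset.sum_sub_distrib,
      ← Finset.sum_mul, ← hsdef]
    simp [sq]
  constructor
  · nlinarith [Finset.sum_nonneg hterm]
  constructor
  · intro heq
    have hz : ∀ i ∈ Finset.univ, l i * (s - l i) = 0 := by
      rw [← Finset.sum_eq_zero_iff_of_nonneg hterm, ← hkey, heq, sub_self]
    have hcases : ∀ i, l i = 0 ∨ l i = s := by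
      intro i
      rcases mul_eq_zero.1 (hz i (Finset.mem_univ i)) with h | h
      · exact Or.inl h
      · exact Or.inr (by linarith)
    obtain ⟨i₀, hi₀⟩ : ∃ i, l i ≠ 0 := by
      by_contra hc
      push_neg at hc
      exact hs.ne' (hsdef.trans (Finset.sum_eq_zero fun i _ => hc i))
    rw [Fintype.card_eq_one_iff]
    refine ⟨⟨i₀, hi₀⟩, ?_⟩
    rintro ⟨j, hj⟩
    refine Subtype.ext ?_
    show j = i₀
    by_contra hji
    have h1 : l i₀ = s := (hcases i₀).resolve_left hi₀
    have h2 : l j = s := (hcases j).resolve_left hj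
    have : l i₀ + l j ≤ s := by
      calc l i₀ + l j = ∑ k ∈ ({i₀, j} : Finset (Fin n)), l k := by
            rw [Finset.sum_pair (fun h => hji h.symm)]
        _ ≤ s := Finset.sum_le_sum_of_subset_of_nonneg (Finset.subset_univ _)
            (fun k _ _ => hnn k)
    linarith
  · intro hcard
    rw [Fintype.card_eq_one_iff] at hcard
    obtain ⟨⟨i₀, hi₀⟩, huniq⟩ := hcard
    have hz : ∀ j, j ≠ i₀ → l j = 0 := by
      intro j hj
      by_contra hc
      exact hj (congrArg Subtype.val (huniq ⟨j, hc⟩))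
    have h1 : s = l i₀ := Finset.sum_eq_single i₀ (fun j _ => hz j) (by simp)
    have h2 : (∑ i, (l i) ^ 2) = l i₀ ^ 2 :=
      Finset.sum_eq_single i₀ (fun j _ hj => by rw [hz j hj]; ring) (by simp)
    rw [h1, h2]

/-- For a POVM `(A_a)` on `ℂ^d` with nonzero effects, the trace of the
scaled frame operator `∑_a Tr(A_a²)/Tr(A_a)` equals `d` if and only if every effect has
rank one, equivalently iff `Tr(A_a²) = (Tr A_a)²` for every `a`. -/
theorem scaled_frame_trace_eq_dim_iff_rank_one {d : ℕ} {α : Type*} [Fintype α]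
    (A : α → Matrix (Fin d) (Fin d) ℂ)
    (hpsd : ∀ a, (A a).PosSemidef) (hsum : ∑ a, A a = 1) (hne : ∀ a, A a ≠ 0) :
    ((∑ a, ((A a * A a).trace).re / ((A a).trace).re = (d : ℝ)) ↔
      (∀ a, (A a).rank = 1)) ∧
    ((∑ a, ((A a * A a).trace).re / ((A a).trace).re = (d : ℝ)) ↔
      (∀ a, (A a * A a).trace = ((A a).trace) ^ 2)) := by
  have hherm : ∀ a, (A a).IsHermitian := fun a => (hpsd a).1
  set l : α → Fin d → ℝ := fun a => (hherm a).eigenvalues with hl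
  have hnn : ∀ a i, 0 ≤ l a i := fun a i => (hpsd a).eigenvalues_nonneg i
  set s : α → ℝ := fun a => ∑ i, l a i with hsdef
  set t : α → ℝ := fun a => ∑ i, (l a i) ^ 2 with htdef
  have htr : ∀ a, (A a).trace = (s a : ℂ) := by
    intro a
    rw [trace_eq_sum_eigs (hherm a), hsdef]
    push_cast
    rfl
  have htr2 : ∀ a, (A a * A a).trace = (t a : ℂ) := by
    intro a
    rw [trace_sq_eq_sum_eigs_sq (hherm a), htdef]
    push_cast
    rfl
  have htrre : ∀ a, ((A a).trace).re = s a := fun a => by rw [htr a]; simp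
  have htr2re : ∀ a, ((A a * A a).trace).re = t a := fun a => by rw [htr2 a]; simp
  have hspos : ∀ a, 0 < s a := by
    intro a
    rcases (Finset.sum_nonneg fun i _ => hnn a i).lt_or_eq with h | h
    · exact h
    · exfalso
      apply hne a
      apply eigs_zero_imp_zero (hherm a)
      intro i
      have := (Finset.sum_eq_zero_iff_of_nonneg fun i _ => hnn a i).1 h.symm i (Finset.mem_univ i)
      exact this
  have hkey := fun a => real_key (l a) (hnn a) (hspos a)
  have hsumd : ∑ a, s a = (d : ℝ) := by
    have h1 : ∑ a, (A a).trace = (d : ℂ) := by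
      rw [← Matrix.trace_sum, hsum, Matrix.trace_one]
      simp
    have h2 : ∑ a, (A a).trace = ((∑ a, s a : ℝ) : ℂ) := by
      rw [Finset.sum_congr rfl fun a _ => htr a]
      push_cast
      rfl
    rw [h1] at h2
    exact_mod_cast h2.symm
  have hdivle : ∀ a ∈ Finset.univ, t a / s a ≤ s a := fun a _ => by
    rw [div_le_iff₀ (hspos a)]
    calc t a ≤ (s a) ^ 2 := (hkey a).1
      _ = s a * s a := sq (s a) ▸ sq (s a) ▸ by ring
  have hmain : (∑ a, ((A a * A a).trace).re / ((A a).trace).re = (d : ℝ)) ↔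
      ∀ a, t a = (s a) ^ 2 := by
    rw [Finset.sum_congr rfl fun a _ => by rw [htrre a, htr2re a], ← hsumd]
    rw [Finset.sum_eq_sum_iff_of_le hdivle]
    constructor
    · intro h a
      have := h a (Finset.mem_univ a)
      rw [div_eq_iff (hspos a).ne'] at this
      rw [this, sq]
    · intro h a _
      rw [h a, sq, mul_div_assoc, div_self (hspos a).ne', mul_one]
  constructor
  · rw [hmain]
    apply forall_congr'
    intro a
    rw [(hkey a).2, ← (hherm a).rank_eq_card_non_zero_eigs]
  · rw [hmain]
    apply forall_congr'
    intro a
    rw [htr2 a, htr a, ← Complex.ofReal_pow, Complex.ofReal_inj]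
end

section
/- Let d ≥ 2 and let (A_a) be a POVM on ℂ^d with every effect nonzero. Then there exists a d×d complex matrix X with Tr X = 0 and Tr(XᴴX) = 1 such that Q_A(X) ≤ 1/(d+1). Consequently the completeness stability satisfies s(A) ≤ 1/(d+1). -/
open Matrix
open scoped ComplexOrder

lemma entryCS {n : Type*} [Fintype n] {A : Matrix n n ℂ} (h : A.PosSemidef)
    (i j : n) : ‖A i j‖ ^ 2 ≤ (A i i).re * (A j j).re := by
  obtain ⟨B, rfl⟩ : ∃ B : Matrix n n ℂ, A = Bᴴ * B := by
    classical
    open scoped MatrixOrder in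
    exact CStarAlgebra.nonneg_iff_eq_star_mul_self.mp h.nonneg
  set u : EuclideanSpace ℂ n := WithLp.toLp 2 (fun k => B k i) with hu
  set v : EuclideanSpace ℂ n := WithLp.toLp 2 (fun k => B k j) with hv
  have h1 : (Bᴴ * B) i j = inner ℂ u v := by
    simp [Matrix.mul_apply, Matrix.conjTranspose_apply, PiLp.inner_apply, hu, hv, mul_comm]
  have h2 : ((Bᴴ * B) i i).re = ‖u‖ ^ 2 := by
    rw [show (Bᴴ * B) i i = inner ℂ u u by
      rw [hu, PiLp.inner_apply]; simp [Matrix.mul_apply, Matrix.conjTranspose_apply, mul_comm, Complex.mul_conj']]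
    rw [← inner_self_eq_norm_sq (𝕜 := ℂ)]; rfl
  have h3 : ((Bᴴ * B) j j).re = ‖v‖ ^ 2 := by
    rw [show (Bᴴ * B) j j = inner ℂ v v by
      rw [hv, PiLp.inner_apply]; simp [Matrix.mul_apply, Matrix.conjTranspose_apply, mul_comm, Complex.mul_conj']]
    rw [← inner_self_eq_norm_sq (𝕜 := ℂ)]; rfl
  rw [h1, h2, h3]
  calc ‖(inner ℂ u v : ℂ)‖ ^ 2 ≤ (‖u‖ * ‖v‖) ^ 2 :=
        pow_le_pow_left₀ (norm_nonneg _) (norm_inner_le_norm (𝕜 := ℂ) u v) 2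
    _ = ‖u‖ ^ 2 * ‖v‖ ^ 2 := by ring

lemma diagRe_nonneg {n : Type*} [Fintype n] [DecidableEq n] {A : Matrix n n ℂ} (h : A.PosSemidef)
    (i : n) : 0 ≤ (A i i).re := by
  have h2 := h.re_dotProduct_nonneg (Pi.single i 1)
  simpa [dotProduct, Matrix.mulVec, Pi.single_apply] using h2

lemma tracePos {n : Type*} [Fintype n] [DecidableEq n] {A : Matrix n n ℂ} (h : A.PosSemidef)
    (hne : A ≠ 0) : 0 < A.trace.re := by
  have hdiag : ∀ i, 0 ≤ (A i i).re := diagRe_nonneg h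
  have htr : A.trace.re = ∑ i, (A i i).re := by
    simp [Matrix.trace, Matrix.diag, Complex.re_sum]
  have h0 : 0 ≤ A.trace.re := by rw [htr]; exact Finset.sum_nonneg fun i _ => hdiag i
  rcases h0.lt_or_eq with hlt | heq
  · exact hlt
  · exfalso
    have hz : ∀ i, (A i i).re = 0 := by
      intro i
      have := (Finset.sum_eq_zero_iff_of_nonneg (fun i _ => hdiag i)).mp (by rw [← htr, ← heq])
      exact this i (Finset.mem_univ i)
    apply hne
    ext i j
    have h1 := entryCS h i j
    rw [hz i, hz j, mul_zero] at h1
    have : ‖A i j‖ = 0 := by nlinarith [norm_nonneg (A i j), sq_nonneg (‖A i j‖)]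
    simpa using norm_eq_zero.mp this

lemma normsq (z : ℂ) : ‖z‖ ^ 2 = z.re ^ 2 + z.im ^ 2 := by
  rw [Complex.sq_norm, Complex.normSq_apply]; ring

lemma real_id {d : ℕ} (r : Fin d → ℝ) :
    ∑ i, ∑ j, (r i - r j) ^ 2 = 2 * d * (∑ i, (r i) ^ 2) - 2 * (∑ i, r i) ^ 2 := by
  have h : ∀ i j : Fin d, (r i - r j) ^ 2 = (r i) ^ 2 + (r j) ^ 2 - 2 * (r i * r j) := by
    intros; ring
  simp_rw [h, Finset.sum_sub_distrib, Finset.sum_add_distrib, Finset.sum_const,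
    Finset.card_univ, Fintype.card_fin, ← Finset.mul_sum, ← Finset.sum_mul, sq (∑ i, r i),
    Finset.mul_sum]
  push_cast
  ring_nf
  rw [show ∑ x : Fin d, r x ^ 2 * (d:ℝ) = (∑ x, r x ^ 2) * d by rw [← Finset.sum_mul],
    show ∑ x : Fin d, (d:ℝ) * r x ^ 2 * 2 = (d:ℝ) * (∑ x, r x ^ 2) * 2 by rw [Finset.mul_sum, Finset.sum_mul]]
  ring

lemma complex_id {d : ℕ} (a : Fin d → ℂ) :
    ∑ i, ∑ j, ‖a i - a j‖ ^ 2 = 2 * d * (∑ i, ‖a i‖ ^ 2) - 2 * ‖∑ i, a i‖ ^ 2 := by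
  calc ∑ i, ∑ j, ‖a i - a j‖ ^ 2
      = (∑ i, ∑ j, ((a i).re - (a j).re) ^ 2) + (∑ i, ∑ j, ((a i).im - (a j).im) ^ 2) := by
        simp_rw [normsq, Complex.sub_re, Complex.sub_im, ← Finset.sum_add_distrib]
    _ = 2 * d * (∑ i, ‖a i‖ ^ 2) - 2 * ‖∑ i, a i‖ ^ 2 := by
        rw [real_id (fun i => (a i).re), real_id (fun i => (a i).im)]
        simp only [normsq, Complex.re_sum, Complex.im_sum, Finset.sum_add_distrib]
        ring

lemma numer {d : ℕ} (hd : 0 < d) {M : Matrix (Fin d) (Fin d) ℂ} (hM : M.PosSemidef) :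
    (∑ p ∈ Finset.univ.filter (fun p : Fin d × Fin d => p.1 ≠ p.2), ‖M p.2 p.1‖ ^ 2)
      + (1 / (d:ℝ)) * ∑ p ∈ Finset.univ.filter (fun p : Fin d × Fin d => p.1 ≠ p.2),
          ‖M p.1 p.1 - M p.2 p.2‖ ^ 2 / 2
    ≤ (1 - 1 / (d:ℝ)) * (M.trace.re) ^ 2 := by
  set T : ℝ := M.trace.re with hT
  set F : ℝ := ∑ i, ∑ j, ‖M i j‖ ^ 2 with hF
  set S : ℝ := ∑ i, ‖M i i‖ ^ 2 with hS
  set N : ℝ := ‖M.trace‖ ^ 2 with hN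
  have htr : M.trace = ∑ i, M i i := by simp [Matrix.trace, Matrix.diag]
  -- first sum
  have h1 : (∑ p ∈ Finset.univ.filter (fun p : Fin d × Fin d => p.1 ≠ p.2), ‖M p.2 p.1‖ ^ 2)
      = F - S := by
    have := Finset.sum_filter_add_sum_filter_not Finset.univ
      (fun p : Fin d × Fin d => p.1 ≠ p.2) (fun p => ‖M p.2 p.1‖ ^ 2)
    have hfull : ∑ p : Fin d × Fin d, ‖M p.2 p.1‖ ^ 2 = F := by
      rw [hF, Fintype.sum_prod_type]
      exact Finset.sum_comm
    have hdiag : ∑ p ∈ Finset.univ.filter (fun p : Fin d × Fin d => ¬ p.1 ≠ p.2),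
        ‖M p.2 p.1‖ ^ 2 = S := by
      rw [Finset.sum_filter, Fintype.sum_prod_type, hS]
      simp
    linarith [this, hfull, hdiag]
  -- second sum
  have h2 : (∑ p ∈ Finset.univ.filter (fun p : Fin d × Fin d => p.1 ≠ p.2),
      ‖M p.1 p.1 - M p.2 p.2‖ ^ 2 / 2) = (2 * d * S - 2 * N) / 2 := by
    have := Finset.sum_filter_add_sum_filter_not Finset.univ
      (fun p : Fin d × Fin d => p.1 ≠ p.2) (fun p => ‖M p.1 p.1 - M p.2 p.2‖ ^ 2 / 2)
    have hdiag : ∑ p ∈ Finset.univ.filter (fun p : Fin d × Fin d => ¬ p.1 ≠ p.2),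
        (‖M p.1 p.1 - M p.2 p.2‖ ^ 2 / 2) = 0 := by
      apply Finset.sum_eq_zero
      intro p hp
      simp only [Finset.mem_filter, not_not] at hp
      rw [hp.2]
      simp
    have hfull : ∑ p : Fin d × Fin d, (‖M p.1 p.1 - M p.2 p.2‖ ^ 2 / 2)
        = (2 * d * S - 2 * N) / 2 := by
      rw [Fintype.sum_prod_type]
      simp_rw [← Finset.sum_div]
      congr 1
      rw [complex_id (fun i => M i i), hN, htr]
    linarith [this, hdiag, hfull]
  rw [h1, h2]
  -- bounds
  have hFB : F ≤ T ^ 2 := by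
    have : T = ∑ i, (M i i).re := by rw [hT, htr, Complex.re_sum]
    rw [this, hF, sq, Finset.sum_mul_sum]
    apply Finset.sum_le_sum
    intro i _
    apply Finset.sum_le_sum
    intro j _
    exact entryCS hM i j
  have hNB : T ^ 2 ≤ N := by
    rw [hN, hT, normsq]
    nlinarith [sq_nonneg M.trace.im]
  have hd' : (0:ℝ) < d := by exact_mod_cast hd
  have hc : (0:ℝ) < 1 / (d:ℝ) := by positivity
  have e1 : 1/(d:ℝ) * ((2*d*S - 2*N)/2) = S - 1/(d:ℝ)*N := by field_simp
  have e2 : (1 - 1/(d:ℝ)) * T^2 = T^2 - 1/(d:ℝ)*T^2 := by ring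
  have hmul : 1/(d:ℝ) * T^2 ≤ 1/(d:ℝ) * N := mul_le_mul_of_nonneg_left hNB hc.le
  linarith

noncomputable def Dmat {d : ℕ} (p : Fin d × Fin d) : Matrix (Fin d) (Fin d) ℂ :=
  (((Real.sqrt 2)⁻¹ : ℝ) : ℂ) • (Matrix.single p.1 p.1 1 - Matrix.single p.2 p.2 1)

lemma Etrace {d : ℕ} (p : Fin d × Fin d) (h : p.1 ≠ p.2) :
    (Matrix.single p.1 p.2 (1:ℂ)).trace = 0 :=
  Matrix.trace_single_eq_of_ne _ _ _ h

lemma Ehs {d : ℕ} (p : Fin d × Fin d) :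
    ((Matrix.single p.1 p.2 (1:ℂ))ᴴ * Matrix.single p.1 p.2 (1:ℂ)).trace = 1 := by
  simp [Matrix.trace, Matrix.diag, Matrix.mul_apply, Matrix.single,
    Matrix.conjTranspose_apply, ite_and, apply_ite]

lemma Emul {d : ℕ} (M : Matrix (Fin d) (Fin d) ℂ) (p : Fin d × Fin d) :
    (M * Matrix.single p.1 p.2 (1:ℂ)).trace = M p.2 p.1 := by
  simp [Matrix.trace, Matrix.diag, Matrix.mul_apply, Matrix.single, ite_and]

lemma Dtrace {d : ℕ} (p : Fin d × Fin d) : (Dmat p).trace = 0 := by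
  simp [Dmat, Matrix.trace_smul, Matrix.trace_sub, Matrix.trace_single_eq_same]

lemma Dhs {d : ℕ} (p : Fin d × Fin d) (h : p.1 ≠ p.2) :
    ((Dmat p)ᴴ * Dmat p).trace = 1 := by
  have h2 : (Real.sqrt 2) ^ 2 = 2 := Real.sq_sqrt (by norm_num)
  simp only [Dmat, Matrix.conjTranspose_smul, Matrix.smul_mul, Matrix.mul_smul, smul_smul,
    Matrix.trace_smul]
  rw [Matrix.conjTranspose_sub]
  have e1 : (Matrix.single p.1 p.1 (1:ℂ))ᴴ = Matrix.single p.1 p.1 1 := by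
    ext i j; simp [Matrix.conjTranspose_apply, Matrix.single, ite_and, and_comm]
    aesop
  have e2 : (Matrix.single p.2 p.2 (1:ℂ))ᴴ = Matrix.single p.2 p.2 1 := by
    ext i j; simp [Matrix.conjTranspose_apply, Matrix.single, ite_and, and_comm]
    aesop
  rw [e1, e2, sub_mul, mul_sub, mul_sub]
  rw [Matrix.single_mul_single_same, Matrix.single_mul_single_same,
    Matrix.single_mul_single_of_ne (h := h) (d := (1:ℂ)), Matrix.single_mul_single_of_ne (h := h.symm) (d := (1:ℂ))]
  simp only [Matrix.trace_sub, Matrix.trace_single_eq_same, Matrix.trace_zero, one_mul]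
  rw [Complex.star_def, Complex.conj_ofReal]
  rw [show ((((Real.sqrt 2)⁻¹:ℝ)):ℂ) * (((Real.sqrt 2)⁻¹:ℝ):ℂ) = ((((Real.sqrt 2)⁻¹ * (Real.sqrt 2)⁻¹ : ℝ)):ℂ) from by push_cast; ring]
  have : (Real.sqrt 2)⁻¹ * (Real.sqrt 2)⁻¹ = 1/2 := by
    rw [← mul_inv]; rw [show Real.sqrt 2 * Real.sqrt 2 = 2 by nlinarith [h2]]; norm_num
  rw [this]
  norm_num

lemma Dmul {d : ℕ} (M : Matrix (Fin d) (Fin d) ℂ) (p : Fin d × Fin d) :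
    (M * Dmat p).trace = (((Real.sqrt 2)⁻¹:ℝ):ℂ) * (M p.1 p.1 - M p.2 p.2) := by
  simp only [Dmat, Matrix.mul_smul, Matrix.trace_smul, mul_sub, Matrix.trace_sub, smul_eq_mul]
  rw [Emul M (p.1, p.1), Emul M (p.2, p.2)]

lemma Dnorm {d : ℕ} (M : Matrix (Fin d) (Fin d) ℂ) (p : Fin d × Fin d) :
    ‖(M * Dmat p).trace‖ ^ 2 = ‖M p.1 p.1 - M p.2 p.2‖ ^ 2 / 2 := by
  rw [Dmul, norm_mul, mul_pow]
  have : ‖(((Real.sqrt 2)⁻¹:ℝ):ℂ)‖ ^ 2 = 1/2 := by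
    rw [Complex.norm_real, Real.norm_eq_abs, sq_abs]
    rw [inv_pow, Real.sq_sqrt (by norm_num : (0:ℝ) ≤ 2)]
    norm_num
  rw [this]; ring

/-- For `d ≥ 2` and any POVM `(A_a)` on `ℂ^d` with nonzero effects,
there is a traceless matrix `X` of unit Hilbert–Schmidt norm with
`Q_A(X) = ∑_a |Tr(A_a X)|²/Tr(A_a) ≤ 1/(d+1)`; consequently the completeness stability
satisfies `s(A) ≤ 1/(d+1)`. -/
theorem completeness_stability_le {d : ℕ} (hd : 2 ≤ d) {α : Type*} [Fintype α]
    (A : α → Matrix (Fin d) (Fin d) ℂ)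
    (hpsd : ∀ a, (A a).PosSemidef) (hsum : ∑ a, A a = 1) (hne : ∀ a, A a ≠ 0) :
    (∃ X : Matrix (Fin d) (Fin d) ℂ, X.trace = 0 ∧ (Xᴴ * X).trace = 1 ∧
      ∑ a, ‖(A a * X).trace‖ ^ 2 / ((A a).trace.re) ≤ 1 / (d + 1)) ∧
    sInf {r : ℝ | ∃ X : Matrix (Fin d) (Fin d) ℂ, (Xᴴ * X).trace = 1 ∧
        r = ∑ a, ‖(A a * X).trace‖ ^ 2 / ((A a).trace.re)} ≤ 1 / (d + 1) := by
  classical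
  have hd0 : 0 < d := by omega
  have hdR : (0:ℝ) < d := by exact_mod_cast hd0
  have hd1R : (0:ℝ) < (d:ℝ) + 1 := by linarith
  set c : ℝ := 1 / ((d:ℝ) + 1) with hc
  set P : Finset (Fin d × Fin d) :=
    Finset.univ.filter (fun p : Fin d × Fin d => p.1 ≠ p.2) with hP
  have hPne : P.Nonempty := by
    refine ⟨(⟨0, by omega⟩, ⟨1, by omega⟩), ?_⟩
    simp [hP, Fin.ext_iff]
  have hPcard : (P.card : ℝ) = d * d - d := by
    have hdiag : (Finset.univ.filter (fun p : Fin d × Fin d => ¬ p.1 ≠ p.2)).card = d := by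
      have himg : Finset.univ.filter (fun p : Fin d × Fin d => ¬ p.1 ≠ p.2)
          = Finset.univ.image (fun i : Fin d => (i, i)) := by
        ext p
        simp only [Finset.mem_filter, Finset.mem_univ, true_and, Finset.mem_image, not_not]
        constructor
        · intro h; exact ⟨p.1, by obtain ⟨x, y⟩ := p; cases h; rfl⟩
        · rintro ⟨i, rfl⟩; rfl
      rw [himg, Finset.card_image_of_injective _ (fun a b hab => by simpa using congrArg Prod.fst hab)]
      simp
    have hcomb := Finset.card_filter_add_card_filter_not
      (s := (Finset.univ : Finset (Fin d × Fin d)))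
      (p := fun p : Fin d × Fin d => p.1 ≠ p.2)
    have huniv : (Finset.univ : Finset (Fin d × Fin d)).card = d * d := by
      simp [Finset.card_univ]
    have hPc : P.card + d = d * d := by rw [hP]; omega
    have : ((P.card : ℝ) + d) = d * d := by exact_mod_cast congrArg (Nat.cast : ℕ → ℝ) hPc
    linarith
  have hT : ∀ a, 0 < (A a).trace.re := fun a => tracePos (hpsd a) (hne a)
  have hTsum : ∑ a, (A a).trace.re = d := by
    have h1 : ∑ a, (A a).trace = (d:ℂ) := by
      rw [← Matrix.trace_sum, hsum, Matrix.trace_one]; simp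
    calc ∑ a, (A a).trace.re = (∑ a, (A a).trace).re := (Complex.re_sum _ _).symm
      _ = d := by rw [h1]; simp
  -- the weighted average bound
  have hWa : ∀ a : α,
      (∑ p ∈ P, ‖(A a * Matrix.single p.1 p.2 (1:ℂ)).trace‖ ^ 2 / (A a).trace.re)
        + (1/(d:ℝ)) * ∑ p ∈ P, ‖(A a * Dmat p).trace‖ ^ 2 / (A a).trace.re
      ≤ (1 - 1/(d:ℝ)) * (A a).trace.re := by
    intro a
    have hnum := numer hd0 (hpsd a)
    have hTa := hT a
    have e1 : ∀ p : Fin d × Fin d,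
        ‖(A a * Matrix.single p.1 p.2 (1:ℂ)).trace‖ ^ 2 = ‖A a p.2 p.1‖ ^ 2 :=
      fun p => by rw [Emul]
    have e2 : ∀ p : Fin d × Fin d,
        ‖(A a * Dmat p).trace‖ ^ 2 = ‖A a p.1 p.1 - A a p.2 p.2‖ ^ 2 / 2 :=
      fun p => Dnorm (A a) p
    simp_rw [e1, e2]
    rw [← Finset.sum_div, ← Finset.sum_div, ← mul_div_assoc, ← add_div,
      div_le_iff₀ hTa]
    calc (∑ p ∈ P, ‖A a p.2 p.1‖ ^ 2)
          + (1/(d:ℝ)) * ∑ p ∈ P, ‖A a p.1 p.1 - A a p.2 p.2‖ ^ 2 / 2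
        ≤ (1 - 1/(d:ℝ)) * ((A a).trace.re) ^ 2 := hnum
      _ = (1 - 1/(d:ℝ)) * (A a).trace.re * (A a).trace.re := by ring
  have hW : (∑ p ∈ P, ∑ a, ‖(A a * Matrix.single p.1 p.2 (1:ℂ)).trace‖ ^ 2 / (A a).trace.re)
      + (1/(d:ℝ)) * ∑ p ∈ P, ∑ a, ‖(A a * Dmat p).trace‖ ^ 2 / (A a).trace.re
      ≤ (d:ℝ) - 1 := by
    rw [Finset.sum_comm (s := P), Finset.sum_comm (s := P)]
    rw [Finset.mul_sum, ← Finset.sum_add_distrib]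
    calc ∑ a, ((∑ p ∈ P, ‖(A a * Matrix.single p.1 p.2 (1:ℂ)).trace‖ ^ 2 / (A a).trace.re)
          + (1/(d:ℝ)) * ∑ p ∈ P, ‖(A a * Dmat p).trace‖ ^ 2 / (A a).trace.re)
        ≤ ∑ a, (1 - 1/(d:ℝ)) * (A a).trace.re := Finset.sum_le_sum fun a _ => hWa a
      _ = (1 - 1/(d:ℝ)) * ∑ a, (A a).trace.re := by rw [Finset.mul_sum]
      _ = (1 - 1/(d:ℝ)) * d := by rw [hTsum]
      _ = (d:ℝ) - 1 := by field_simp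
  -- extract a good candidate
  have hex : ∃ p ∈ P,
      (∑ a, ‖(A a * Matrix.single p.1 p.2 (1:ℂ)).trace‖ ^ 2 / (A a).trace.re) ≤ c ∨
      (∑ a, ‖(A a * Dmat p).trace‖ ^ 2 / (A a).trace.re) ≤ c := by
    by_contra hcon
    push_neg at hcon
    have h1 : (P.card : ℝ) * c < ∑ p ∈ P,
        ∑ a, ‖(A a * Matrix.single p.1 p.2 (1:ℂ)).trace‖ ^ 2 / (A a).trace.re := by
      have := Finset.sum_lt_sum_of_nonempty hPne (f := fun _ => c)
        (fun p hp => (hcon p hp).1)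
      simpa [Finset.sum_const, nsmul_eq_mul] using this
    have h2 : (P.card : ℝ) * c ≤ ∑ p ∈ P,
        ∑ a, ‖(A a * Dmat p).trace‖ ^ 2 / (A a).trace.re := by
      have := Finset.sum_le_sum (f := fun _ => c)
        (fun p (hp : p ∈ P) => ((hcon p hp).2).le)
      simpa [Finset.sum_const, nsmul_eq_mul] using this
    have h3 : (1/(d:ℝ)) * ((P.card : ℝ) * c) ≤ (1/(d:ℝ)) * ∑ p ∈ P,
        ∑ a, ‖(A a * Dmat p).trace‖ ^ 2 / (A a).trace.re :=
      mul_le_mul_of_nonneg_left h2 (by positivity)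
    have heq : (P.card : ℝ) * c + (1/(d:ℝ)) * ((P.card : ℝ) * c) = (d:ℝ) - 1 := by
      rw [hPcard, hc]
      field_simp
    linarith
  obtain ⟨p, hp, hcase⟩ := hex
  have hpneq : p.1 ≠ p.2 := by
    have := hp
    rw [hP, Finset.mem_filter] at this
    exact this.2
  obtain ⟨X, hX0, hX1, hXQ⟩ : ∃ X : Matrix (Fin d) (Fin d) ℂ, X.trace = 0 ∧
      (Xᴴ * X).trace = 1 ∧ (∑ a, ‖(A a * X).trace‖ ^ 2 / (A a).trace.re) ≤ c := by
    rcases hcase with h | h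
    · exact ⟨_, Etrace p hpneq, Ehs p, h⟩
    · exact ⟨_, Dtrace p, Dhs p hpneq, h⟩
  refine ⟨⟨X, hX0, hX1, hXQ⟩, ?_⟩
  refine le_trans (csInf_le ?_ ?_) hXQ
  · refine ⟨0, fun r hr => ?_⟩
    obtain ⟨Y, hY1, rfl⟩ := hr
    exact Finset.sum_nonneg fun a _ => div_nonneg (by positivity) (hT a).le
  · exact ⟨X, hX1, rfl⟩
end

section
/- Let (E_i)_{i=1,…,d²} be a SIC-POVM on ℂ^d. Then the scaled frame superoperator has the tight rank-1 informationally complete form: for every d×d complex matrix X, d(d+1) · ∑_{i=1}^{d²} Tr(E_i X) · E_i = X + (Tr X) · 1. -/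
open Matrix
open scoped ComplexOrder

/-- For a SIC-POVM `(E_i)_{i=1,…,d²}` on `ℂ^d`, the scaled frame
superoperator has the tight rank-1 informationally complete form: for every `d × d`
complex matrix `X`, `d(d+1) ∑_i Tr(E_i X) E_i = X + (Tr X)·1`. -/
theorem sic_povm_tight_frame {d : ℕ} (hd : 0 < d)
    (E : Fin (d ^ 2) → Matrix (Fin d) (Fin d) ℂ)
    (hpsd : ∀ i, (E i).PosSemidef) (hsum : ∑ i, E i = 1)
    (htr : ∀ i, (E i).trace = 1 / (d : ℂ))
    (hhs : ∀ i j, (E i * E j).trace =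
      ((d : ℂ) * (if i = j then 1 else 0) + 1) / ((d : ℂ) ^ 2 * ((d : ℂ) + 1)))
    (X : Matrix (Fin d) (Fin d) ℂ) :
    ((d : ℂ) * ((d : ℂ) + 1)) • ∑ i, ((E i * X).trace) • E i =
      X + X.trace • (1 : Matrix (Fin d) (Fin d) ℂ) := by
  have hd0 : (d : ℂ) ≠ 0 := Nat.cast_ne_zero.mpr hd.ne'
  have hd1 : (d : ℂ) + 1 ≠ 0 := by
    have : ((d + 1 : ℕ) : ℂ) ≠ 0 := Nat.cast_ne_zero.mpr (Nat.succ_ne_zero d)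
    simpa using this
  set D : ℂ := (d : ℂ) ^ 2 * ((d : ℂ) + 1) with hDdef
  have hD0 : D ≠ 0 := mul_ne_zero (pow_ne_zero _ hd0) hd1
  have hne : Nonempty (Fin (d ^ 2)) := ⟨⟨0, pow_pos hd 2⟩⟩
  -- Key pointwise computation on the E's
  have key : ∀ j, ((d : ℂ) * ((d : ℂ) + 1)) • ∑ i, ((E i * E j).trace) • E i =
      E j + (E j).trace • (1 : Matrix (Fin d) (Fin d) ℂ) := by
    intro j
    have h1 : ∀ i, ((E i * E j).trace) • E i =
        (if i = j then ((d : ℂ) / D) • E j else 0) + (1 / D) • E i := by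
      intro i
      rw [hhs]
      split_ifs with h
      · subst h
        rw [mul_one, add_div, add_smul]
      · rw [mul_zero, zero_add, zero_add]
    have h2 : ∑ i, ((E i * E j).trace) • E i =
        (∑ i, if i = j then ((d : ℂ) / D) • E j else 0) + (1 / D) • ∑ i, E i := by
      rw [Finset.smul_sum, ← Finset.sum_add_distrib]
      exact Finset.sum_congr rfl fun i _ => h1 i
    have s1 : (d : ℂ) * ((d : ℂ) + 1) * ((d : ℂ) / D) = 1 := by
      field_simp [hDdef]; ring
    have s2 : (d : ℂ) * ((d : ℂ) + 1) * (1 / D) = 1 / (d : ℂ) := by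
      field_simp [hDdef]; ring
    rw [h2, Finset.sum_ite_eq' Finset.univ j, if_pos (Finset.mem_univ j), hsum,
      smul_add, smul_smul, smul_smul, s1, s2, one_smul, htr j]
  -- linear independence of the E's
  have hli : LinearIndependent ℂ E := by
    rw [Fintype.linearIndependent_iff]
    intro c hc
    have hj : ∀ j, (d : ℂ) * c j + ∑ i, c i = 0 := by
      intro j
      have h := congrArg (fun M => (M * E j).trace) hc
      simp only [Finset.sum_mul, smul_mul_assoc, trace_sum, trace_smul, smul_eq_mul,
        zero_mul, trace_zero, hhs] at h
      have h2 : ∀ i, c i * (((d : ℂ) * (if i = j then 1 else 0) + 1) / D) =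
          (if i = j then (d : ℂ) * c j / D else 0) + c i / D := by
        intro i
        split_ifs with hij
        · subst hij; rw [mul_one]; field_simp
        · rw [mul_zero, zero_add, zero_add, mul_one_div]
      rw [Finset.sum_congr rfl (fun i _ => h2 i), Finset.sum_add_distrib,
        Finset.sum_ite_eq' Finset.univ j, if_pos (Finset.mem_univ j),
        ← Finset.sum_div, ← add_div, div_eq_zero_iff] at h
      exact h.resolve_right hD0
    have hS : ∑ i, c i = 0 := by
      have h := Finset.sum_congr rfl (fun j (_ : j ∈ Finset.univ) => hj j)
      rw [Finset.sum_add_distrib, ← Finset.mul_sum, Finset.sum_const, Finset.sum_const,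
        Finset.card_univ, Fintype.card_fin, smul_zero, nsmul_eq_mul] at h
      have h3 : ((d : ℂ) + (d : ℂ) ^ 2) * (∑ i, c i) = 0 := by
        push_cast at h ⊢; linear_combination h
      have h4 : (d : ℂ) + (d : ℂ) ^ 2 ≠ 0 := by
        have : (d : ℂ) + (d : ℂ) ^ 2 = (d : ℂ) * (1 + (d : ℂ)) := by ring
        rw [this]
        exact mul_ne_zero hd0 (by rw [add_comm]; exact hd1)
      exact (mul_eq_zero.mp h3).resolve_left h4
    intro j
    have h := hj j
    rw [hS, add_zero, mul_eq_zero] at h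
    exact h.resolve_left hd0
  -- E is a basis
  have hcard : Fintype.card (Fin (d ^ 2)) =
      Module.finrank ℂ (Matrix (Fin d) (Fin d) ℂ) := by
    simp [Module.finrank_matrix, pow_two]
  let b := basisOfLinearIndependentOfCardEqFinrank hli hcard
  have hb : ∀ i, b i = E i := fun i => by
    simp [b, coe_basisOfLinearIndependentOfCardEqFinrank]
  -- the two linear maps
  let f : Fin (d ^ 2) → Matrix (Fin d) (Fin d) ℂ →ₗ[ℂ] ℂ := fun i =>
    (Matrix.traceLinearMap (Fin d) ℂ ℂ).comp (LinearMap.mulLeft ℂ (E i))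
  let L1 : Matrix (Fin d) (Fin d) ℂ →ₗ[ℂ] Matrix (Fin d) (Fin d) ℂ :=
    ((d : ℂ) * ((d : ℂ) + 1)) • ∑ i, (f i).smulRight (E i)
  let L2 : Matrix (Fin d) (Fin d) ℂ →ₗ[ℂ] Matrix (Fin d) (Fin d) ℂ :=
    LinearMap.id + (Matrix.traceLinearMap (Fin d) ℂ ℂ).smulRight 1
  have hL : L1 = L2 := by
    apply b.ext
    intro i
    rw [hb]
    simpa [L1, L2, f, LinearMap.sum_apply] using key i
  have h := LinearMap.congr_fun hL X
  simpa [L1, L2, f, LinearMap.sum_apply] using h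
end

section
/- Let (E_i)_{i=1,…,d²} be a SIC-POVM on ℂ^d with d ≥ 2. Then the completeness stability of the SIC-POVM attains the maximal value 1/(d+1): for every d×d complex matrix X with Tr(XᴴX) = 1 one has Q_E(X) = ∑_i d·|Tr(E_i X)|² ≥ 1/(d+1), and there exists such an X (any traceless X of unit Hilbert–Schmidt norm) achieving equality. -/
open Matrix
open scoped ComplexOrder

section SicAux

variable {d : ℕ}

/-- Trace of `E j` against a linear combination of the `E i`'s, from the Gram data. -/
lemma sic_key (E : Fin (d ^ 2) → Matrix (Fin d) (Fin d) ℂ)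
    (hhs : ∀ i j, (E i * E j).trace =
      ((d : ℂ) * (if i = j then 1 else 0) + 1) / ((d : ℂ) ^ 2 * ((d : ℂ) + 1)))
    (g : Fin (d ^ 2) → ℂ) (j : Fin (d ^ 2)) :
    (E j * ∑ i, g i • E i).trace
      = ((d : ℂ) * g j + ∑ i, g i) / ((d : ℂ) ^ 2 * ((d : ℂ) + 1)) := by
  rw [Finset.mul_sum, trace_sum]
  simp only [Matrix.mul_smul, trace_smul, hhs, smul_eq_mul]
  have h : ∀ i : Fin (d ^ 2), g i * (((d : ℂ) * (if j = i then 1 else 0) + 1) /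
      ((d : ℂ) ^ 2 * ((d : ℂ) + 1)))
      = (if i = j then (d : ℂ) * g i / ((d : ℂ) ^ 2 * ((d : ℂ) + 1)) else 0)
        + g i / ((d : ℂ) ^ 2 * ((d : ℂ) + 1)) := by
    intro i
    by_cases hij : i = j
    · subst hij
      split_ifs with h'
      · ring
      · exact absurd rfl h'
    · rw [if_neg (fun h => hij h.symm), if_neg hij]
      ring
  rw [Finset.sum_congr rfl fun i _ => h i, Finset.sum_add_distrib,
    Finset.sum_ite_eq' Finset.univ j (fun i => (d : ℂ) * g i / ((d : ℂ) ^ 2 * ((d : ℂ) + 1))),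
    if_pos (Finset.mem_univ j), ← Finset.sum_div]
  ring

/-- The master identity: for every `X` of unit Hilbert–Schmidt norm,
`∑ i, d·‖Tr(E_i X)‖² = (1 + ‖Tr X‖²)/(d+1)`. -/
lemma sic_master (hd : 2 ≤ d) (E : Fin (d ^ 2) → Matrix (Fin d) (Fin d) ℂ)
    (hpsd : ∀ i, (E i).PosSemidef)
    (htr : ∀ i, (E i).trace = 1 / (d : ℂ))
    (hhs : ∀ i j, (E i * E j).trace =
      ((d : ℂ) * (if i = j then 1 else 0) + 1) / ((d : ℂ) ^ 2 * ((d : ℂ) + 1)))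
    (X : Matrix (Fin d) (Fin d) ℂ) (hX : (Xᴴ * X).trace = 1) :
    ∑ i, (d : ℝ) * ‖(E i * X).trace‖ ^ 2 = (1 + ‖X.trace‖ ^ 2) / (d + 1) := by
  have hd0 : (d : ℂ) ≠ 0 := Nat.cast_ne_zero.mpr (by omega)
  have hd1 : (d : ℂ) + 1 ≠ 0 := by
    have : ((d + 1 : ℕ) : ℂ) ≠ 0 := Nat.cast_ne_zero.mpr (by omega)
    push_cast at this; exact this
  have hK0 : (d : ℂ) ^ 2 * ((d : ℂ) + 1) ≠ 0 := by
    exact mul_ne_zero (pow_ne_zero _ hd0) hd1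
  -- linear independence of the SIC effects
  have hli : LinearIndependent ℂ E := by
    rw [Fintype.linearIndependent_iff]
    intro g hg j
    have h0 : ∀ j : Fin (d ^ 2), (d : ℂ) * g j + ∑ i, g i = 0 := by
      intro j
      have hkey := sic_key E hhs g j
      rw [hg, Matrix.mul_zero, trace_zero] at hkey
      have := (div_eq_zero_iff.mp hkey.symm)
      exact this.resolve_right hK0
    have hs0 : (∑ i, g i) = 0 := by
      have h2 : (0 : ℂ) = ∑ j : Fin (d ^ 2), ((d : ℂ) * g j + ∑ i, g i) := by
        rw [Finset.sum_congr rfl fun j _ => h0 j]; simp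
      rw [Finset.sum_add_distrib, ← Finset.mul_sum, Finset.sum_const, Finset.card_univ,
        Fintype.card_fin, nsmul_eq_mul] at h2
      have hfac : ((d : ℂ) + ((d ^ 2 : ℕ) : ℂ)) * (∑ i, g i) = 0 := by
        linear_combination -h2
      have hne : (d : ℂ) + ((d ^ 2 : ℕ) : ℂ) ≠ 0 := by
        push_cast
        intro h
        apply hd0
        have : (d : ℂ) * (1 + (d : ℂ)) = 0 := by ring_nf; linear_combination h
        rcases mul_eq_zero.mp this with h' | h'
        · exact h'
        · exact absurd (by linear_combination h') hd1
      exact (mul_eq_zero.mp hfac).resolve_left hne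
    have := h0 j
    rw [hs0, add_zero] at this
    exact (mul_eq_zero.mp this).resolve_left hd0
  -- `E` is a basis, so `X` is a combination of the `E i`'s
  have hcard : Fintype.card (Fin (d ^ 2))
      = Module.finrank ℂ (Matrix (Fin d) (Fin d) ℂ) := by
    simp [Module.finrank_matrix, Module.finrank_self, pow_two]
  have hne : Nonempty (Fin (d ^ 2)) := ⟨⟨0, by positivity⟩⟩
  obtain ⟨c, hXc⟩ : ∃ c : Fin (d ^ 2) → ℂ, X = ∑ i, c i • E i := by
    let b := basisOfLinearIndependentOfCardEqFinrank hli hcard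
    refine ⟨fun i => b.repr X i, ?_⟩
    have h := b.sum_repr X
    rw [show ⇑b = E from coe_basisOfLinearIndependentOfCardEqFinrank hli hcard] at h
    exact h.symm
  set s : ℂ := ∑ i, c i with hs
  set M : ℂ := ∑ i, star (c i) * c i with hM
  -- trace of X
  have h2 : X.trace = s / (d : ℂ) := by
    rw [hXc, trace_sum]
    simp only [trace_smul, htr, smul_eq_mul]
    rw [← Finset.sum_mul, mul_one_div]
  -- trace of each E j * X
  have h1 : ∀ j, (E j * X).trace = ((d : ℂ) * c j + s) / ((d : ℂ) ^ 2 * ((d : ℂ) + 1)) := by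
    intro j; rw [hXc]; exact sic_key E hhs c j
  -- conjugate transpose of X
  have hXH : Xᴴ = ∑ i, star (c i) • E i := by
    rw [hXc, conjTranspose_sum]
    refine Finset.sum_congr rfl fun i _ => ?_
    rw [conjTranspose_smul, (hpsd i).1.eq]
  -- Hilbert–Schmidt norm constraint in terms of c
  have h3 : (d : ℂ) * M + star s * s = (d : ℂ) ^ 2 * ((d : ℂ) + 1) := by
    have h3' : (Xᴴ * X).trace = ((d : ℂ) * M + star s * s) / ((d : ℂ) ^ 2 * ((d : ℂ) + 1)) := by
      rw [hXH, Finset.sum_mul, trace_sum]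
      simp only [smul_mul_assoc, trace_smul, smul_eq_mul, h1]
      rw [show (∑ i, star (c i) * (((d : ℂ) * c i + s) / ((d : ℂ) ^ 2 * ((d : ℂ) + 1))))
          = (∑ i, star (c i) * ((d : ℂ) * c i + s)) / ((d : ℂ) ^ 2 * ((d : ℂ) + 1)) from by
        rw [Finset.sum_div]; exact Finset.sum_congr rfl fun i _ => (mul_div_assoc _ _ _).symm]
      congr 1
      have hexp : ∀ i : Fin (d ^ 2), star (c i) * ((d : ℂ) * c i + s)
          = (d : ℂ) * (star (c i) * c i) + s * star (c i) := by intro i; ring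
      rw [Finset.sum_congr rfl fun i _ => hexp i, Finset.sum_add_distrib, ← Finset.mul_sum,
        ← Finset.mul_sum, ← star_sum]
      ring
    rw [h3', div_eq_one_iff_eq hK0] at hX
    exact hX
  -- the complex form of the quadratic form
  have hQc : ∑ i, (d : ℂ) * (star ((E i * X).trace) * (E i * X).trace)
      = (1 + star X.trace * X.trace) / ((d : ℂ) + 1) := by
    have hstarK : star ((d : ℂ) ^ 2 * ((d : ℂ) + 1)) = (d : ℂ) ^ 2 * ((d : ℂ) + 1) := by
      simp [star_mul', star_pow]
    have hterm : ∀ i, (d : ℂ) * (star ((E i * X).trace) * (E i * X).trace)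
        = (d : ℂ) * (star ((d : ℂ) * c i + s) * ((d : ℂ) * c i + s))
          / (((d : ℂ) ^ 2 * ((d : ℂ) + 1)) * ((d : ℂ) ^ 2 * ((d : ℂ) + 1))) := by
      intro i
      rw [h1 i, star_div₀, hstarK]
      field_simp
    rw [Finset.sum_congr rfl fun i _ => hterm i, ← Finset.sum_div, ← Finset.mul_sum]
    have hsum2 : ∑ i, star ((d : ℂ) * c i + s) * ((d : ℂ) * c i + s)
        = (d : ℂ) ^ 2 * M + (d : ℂ) * (star s * s) + (d : ℂ) * (star s * s)
          + ((d ^ 2 : ℕ) : ℂ) * (star s * s) := by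
      have hexp : ∀ i : Fin (d ^ 2), star ((d : ℂ) * c i + s) * ((d : ℂ) * c i + s)
          = (d : ℂ) ^ 2 * (star (c i) * c i) + ((d : ℂ) * s) * star (c i)
            + ((d : ℂ) * star s) * c i + star s * s := by
        intro i
        simp only [star_add, star_mul', Complex.star_def, map_natCast]
        ring
      rw [Finset.sum_congr rfl fun i _ => hexp i, Finset.sum_add_distrib,
        Finset.sum_add_distrib, Finset.sum_add_distrib, ← Finset.mul_sum, ← Finset.mul_sum,
        ← Finset.mul_sum, ← star_sum, Finset.sum_const, Finset.card_univ, Fintype.card_fin,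
        nsmul_eq_mul]
      push_cast
      ring
    have hM' : M = ((d : ℂ) ^ 2 * ((d : ℂ) + 1) - star s * s) / (d : ℂ) := by
      simp only [Complex.star_def] at h3 ⊢
      field_simp
      linear_combination h3
    rw [hsum2, h2, hM']
    have hstard : star ((d : ℂ)) = (d : ℂ) := by simp
    rw [star_div₀, hstard]
    simp only [Complex.star_def]
    push_cast
    field_simp
    ring
  -- pass to the real statement
  have hrc : ∀ z : ℂ, star z * z = ((‖z‖ ^ 2 : ℝ) : ℂ) := by
    intro z
    rw [show (star z : ℂ) = (starRingEnd ℂ) z from rfl, RCLike.conj_mul]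
    norm_cast
  have hcast : ((∑ i, (d : ℝ) * ‖(E i * X).trace‖ ^ 2 : ℝ) : ℂ)
      = (((1 + ‖X.trace‖ ^ 2) / (d + 1) : ℝ) : ℂ) := by
    push_cast
    rw [show (∑ i, (d : ℂ) * (‖(E i * X).trace‖ : ℂ) ^ 2)
        = ∑ i, (d : ℂ) * (star ((E i * X).trace) * (E i * X).trace) from
      Finset.sum_congr rfl fun i _ => by rw [hrc]; push_cast; ring]
    rw [hQc, hrc X.trace]
    push_cast
    ring
  exact_mod_cast hcast

end SicAux

/-- For a SIC-POVM `(E_i)_{i=1,…,d²}` on `ℂ^d` with `d ≥ 2`, the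
completeness stability attains the maximal value `1/(d+1)`: for every `X` of unit
Hilbert–Schmidt norm, `Q_E(X) = ∑_i d·|Tr(E_i X)|² ≥ 1/(d+1)`, and there exists such an
`X` (traceless, of unit Hilbert–Schmidt norm) achieving equality. -/
theorem sic_povm_completeness_stability {d : ℕ} (hd : 2 ≤ d)
    (E : Fin (d ^ 2) → Matrix (Fin d) (Fin d) ℂ)
    (hpsd : ∀ i, (E i).PosSemidef) (hsum : ∑ i, E i = 1)
    (htr : ∀ i, (E i).trace = 1 / (d : ℂ))
    (hhs : ∀ i j, (E i * E j).trace =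
      ((d : ℂ) * (if i = j then 1 else 0) + 1) / ((d : ℂ) ^ 2 * ((d : ℂ) + 1))) :
    (∀ X : Matrix (Fin d) (Fin d) ℂ, (Xᴴ * X).trace = 1 →
      1 / (d + 1) ≤ ∑ i, (d : ℝ) * ‖(E i * X).trace‖ ^ 2) ∧
    (∃ X : Matrix (Fin d) (Fin d) ℂ, X.trace = 0 ∧ (Xᴴ * X).trace = 1 ∧
      ∑ i, (d : ℝ) * ‖(E i * X).trace‖ ^ 2 = 1 / (d + 1)) := by
  have hdpos : (0 : ℝ) < (d : ℝ) + 1 := by positivity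
  constructor
  · intro X hX
    rw [sic_master hd E hpsd htr hhs X hX]
    have h1 : (1 : ℝ) ≤ 1 + ‖X.trace‖ ^ 2 := by nlinarith [sq_nonneg ‖X.trace‖]
    exact div_le_div_of_nonneg_right h1 hdpos.le
  · -- the matrix with a single off-diagonal `1` entry
    set i0 : Fin d := ⟨0, by omega⟩
    set i1 : Fin d := ⟨1, by omega⟩
    have hne : i0 ≠ i1 := by
      intro h
      have := congrArg Fin.val h
      simp [i0, i1] at this
    refine ⟨single i0 i1 (1 : ℂ), ?_, ?_, ?_⟩
    · rw [Matrix.trace, diag_single_of_ne _ _ _ hne]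
      simp
    · have hH : (single i0 i1 (1 : ℂ))ᴴ = single i1 i0 (1 : ℂ) := by
        ext a b
        simp only [conjTranspose_apply, Matrix.single, Matrix.of_apply]
        by_cases h1 : i0 = b <;> by_cases h2 : i1 = a <;> simp [h1, h2, and_comm]
      rw [hH, single_mul_single_same, one_mul, Matrix.trace, diag_single_same]
      simp
    · have htr0 : (single i0 i1 (1 : ℂ)).trace = 0 := by
        rw [Matrix.trace, diag_single_of_ne _ _ _ hne]
        simp
      have hHS : ((single i0 i1 (1 : ℂ))ᴴ * single i0 i1 (1 : ℂ)).trace = 1 := by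
        have hH : (single i0 i1 (1 : ℂ))ᴴ = single i1 i0 (1 : ℂ) := by
          ext a b
          simp only [conjTranspose_apply, Matrix.single, Matrix.of_apply]
          by_cases h1 : i0 = b <;> by_cases h2 : i1 = a <;> simp [h1, h2, and_comm]
        rw [hH, single_mul_single_same, one_mul, Matrix.trace, diag_single_same]
        simp
      rw [sic_master hd E hpsd htr hhs _ hHS, htr0]
      simp
end

section
/- Let (A_a) be a POVM on ℂ^{d₁} and (B_b) a POVM on ℂ^{d₂}, both with all effects nonzero. Then the product POVM (A_a ⊗ B_b)_{(a,b)} on ℂ^{d₁d₂}, whose effects are the Kronecker products A_a ⊗ B_b, satisfies s(A ⊗ B) = s(A) · s(B), where s denotes the completeness stability. -/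
open Matrix Kronecker
open scoped ComplexOrder

/-! ### Auxiliary definitions and lemmas -/

/-- Entrywise squared Frobenius norm of a matrix. -/
noncomputable def nsq {m n : Type*} [Fintype m] [Fintype n] (X : Matrix m n ℂ) : ℝ :=
  ∑ i, ∑ j, ‖X i j‖ ^ 2

lemma nsq_nonneg {m n : Type*} [Fintype m] [Fintype n] (X : Matrix m n ℂ) : 0 ≤ nsq X :=
  Finset.sum_nonneg fun _ _ => Finset.sum_nonneg fun _ _ => sq_nonneg _

lemma nsq_eq_zero {m n : Type*} [Fintype m] [Fintype n] {X : Matrix m n ℂ}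
    (h : nsq X = 0) : X = 0 := by
  ext i j
  have h1 : ∀ i ∈ Finset.univ, (0:ℝ) ≤ ∑ j, ‖X i j‖ ^ 2 :=
    fun _ _ => Finset.sum_nonneg fun _ _ => sq_nonneg _
  have := (Finset.sum_eq_zero_iff_of_nonneg h1).mp h i (Finset.mem_univ i)
  have := (Finset.sum_eq_zero_iff_of_nonneg (fun _ _ => sq_nonneg _)).mp this j (Finset.mem_univ j)
  simpa using pow_eq_zero_iff (n := 2) (by norm_num) |>.mp this

lemma trace_conjTranspose_mul_self {m n : Type*} [Fintype m] [Fintype n] (X : Matrix m n ℂ) :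
    (Xᴴ * X).trace = (nsq X : ℂ) := by
  simp only [Matrix.trace, Matrix.diag, Matrix.mul_apply, Matrix.conjTranspose_apply, nsq]
  push_cast
  rw [Finset.sum_comm]
  refine Finset.sum_congr rfl fun i _ => Finset.sum_congr rfl fun j _ => ?_
  exact (RCLike.conj_mul (X i j)).trans (by norm_cast)

open scoped MatrixOrder Matrix.Norms.L2Operator in
lemma Matrix.posSemidef_iff_eq_transpose_mul_self {n : Type*} [Fintype n] [DecidableEq n]
    {A : Matrix n n ℂ} : A.PosSemidef ↔ ∃ B : Matrix n n ℂ, A = Bᴴ * B := by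
  constructor
  · intro h
    obtain ⟨B, hB⟩ := CStarAlgebra.nonneg_iff_eq_star_mul_self.mp h.nonneg
    exact ⟨B, hB⟩
  · rintro ⟨B, rfl⟩
    exact Matrix.posSemidef_conjTranspose_mul_self B

lemma psd_trace_eq {n : Type*} [Fintype n] [DecidableEq n] {M : Matrix n n ℂ}
    (h : M.PosSemidef) : M.trace = (M.trace.re : ℂ) ∧ 0 ≤ M.trace.re := by
  obtain ⟨B, rfl⟩ := Matrix.posSemidef_iff_eq_transpose_mul_self.mp h
  rw [trace_conjTranspose_mul_self]
  simp [nsq_nonneg]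

lemma psd_trace_re_pos {n : Type*} [Fintype n] [DecidableEq n] {M : Matrix n n ℂ}
    (h : M.PosSemidef) (hne : M ≠ 0) : 0 < M.trace.re := by
  rcases (psd_trace_eq h).2.lt_or_eq with h1 | h1
  · exact h1
  · exfalso
    obtain ⟨B, rfl⟩ := Matrix.posSemidef_iff_eq_transpose_mul_self.mp h
    rw [trace_conjTranspose_mul_self] at h1
    simp only [Complex.ofReal_re] at h1
    rw [nsq_eq_zero h1.symm] at hne
    simp at hne

section Stab
variable {n ι : Type*} [Fintype n] [Fintype ι]

/-- The scaled-frame quadratic form. -/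
noncomputable def Qf (A : ι → Matrix n n ℂ) (X : Matrix n n ℂ) : ℝ :=
  ∑ a, ‖(A a * X).trace‖ ^ 2 / ((A a).trace).re

/-- The completeness stability. -/
noncomputable def stab (A : ι → Matrix n n ℂ) : ℝ :=
  sInf {r : ℝ | ∃ X : Matrix n n ℂ, (Xᴴ * X).trace = 1 ∧
      r = ∑ a, ‖(A a * X).trace‖ ^ 2 / ((A a).trace).re}

variable [DecidableEq n]

lemma Qf_nonneg (A : ι → Matrix n n ℂ) (hpsd : ∀ a, (A a).PosSemidef) (X : Matrix n n ℂ) :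
    0 ≤ Qf A X :=
  Finset.sum_nonneg fun a _ => div_nonneg (sq_nonneg _) (psd_trace_eq (hpsd a)).2

lemma stab_bddBelow (A : ι → Matrix n n ℂ) (hpsd : ∀ a, (A a).PosSemidef) :
    BddBelow {r : ℝ | ∃ X : Matrix n n ℂ, (Xᴴ * X).trace = 1 ∧
      r = ∑ a, ‖(A a * X).trace‖ ^ 2 / ((A a).trace).re} := by
  refine ⟨0, fun r hr => ?_⟩
  obtain ⟨X, _, rfl⟩ := hr
  exact Qf_nonneg A hpsd X

lemma stab_nonneg (A : ι → Matrix n n ℂ) (hpsd : ∀ a, (A a).PosSemidef) : 0 ≤ stab A := by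
  refine Real.sInf_nonneg fun r hr => ?_
  obtain ⟨X, _, rfl⟩ := hr
  exact Qf_nonneg A hpsd X

omit [DecidableEq n] in
lemma Qf_smul (A : ι → Matrix n n ℂ) (X : Matrix n n ℂ) {c : ℝ} (hc : 0 ≤ c) :
    Qf A ((c : ℂ) • X) = c ^ 2 * Qf A X := by
  unfold Qf
  rw [Finset.mul_sum]
  refine Finset.sum_congr rfl fun a _ => ?_
  rw [Matrix.mul_smul, Matrix.trace_smul, smul_eq_mul, norm_mul, mul_pow,
    Complex.norm_real, Real.norm_of_nonneg hc, mul_div_assoc]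

lemma nsq_smul {m : Type*} [Fintype m] (X : Matrix m m ℂ) (c : ℝ) :
    nsq ((c : ℂ) • X) = c ^ 2 * nsq X := by
  unfold nsq
  simp only [Finset.mul_sum]
  refine Finset.sum_congr rfl fun i _ => Finset.sum_congr rfl fun j _ => ?_
  simp [norm_smul, mul_pow]

/-- The key scaling bound: `stab A * ‖X‖² ≤ Q_A(X)` for every `X`. -/
lemma stab_le_Qf (A : ι → Matrix n n ℂ) (hpsd : ∀ a, (A a).PosSemidef) (X : Matrix n n ℂ) :
    stab A * nsq X ≤ Qf A X := by
  rcases eq_or_ne (nsq X) 0 with h0 | h0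
  · rw [h0, mul_zero]
    exact Qf_nonneg A hpsd X
  · have hpos : 0 < nsq X := (nsq_nonneg X).lt_of_ne (Ne.symm h0)
    set c : ℝ := (Real.sqrt (nsq X))⁻¹ with hc
    have hcpos : 0 < c := inv_pos.mpr (Real.sqrt_pos.mpr hpos)
    have hmem : Qf A ((c : ℂ) • X) ∈ {r : ℝ | ∃ Y : Matrix n n ℂ, (Yᴴ * Y).trace = 1 ∧
        r = ∑ a, ‖(A a * Y).trace‖ ^ 2 / ((A a).trace).re} := by
      refine ⟨(c : ℂ) • X, ?_, rfl⟩
      rw [trace_conjTranspose_mul_self, nsq_smul]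
      have : c ^ 2 * nsq X = 1 := by
        rw [hc, inv_pow, Real.sq_sqrt hpos.le]
        field_simp
      rw [this, Complex.ofReal_one]
    have hle := csInf_le (stab_bddBelow A hpsd) hmem
    rw [Qf_smul A X hcpos.le] at hle
    have hc2 : c ^ 2 = (nsq X)⁻¹ := by
      rw [hc, inv_pow, Real.sq_sqrt hpos.le]
    rw [hc2] at hle
    calc stab A * nsq X ≤ ((nsq X)⁻¹ * Qf A X) * nsq X := by
          exact mul_le_mul_of_nonneg_right hle hpos.le
      _ = Qf A X := by field_simp

end Stab

section Kron
variable {n₁ n₂ : Type*} [Fintype n₁] [Fintype n₂]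

/-- A slice of a matrix on a product space. -/
def msli (Z : Matrix (n₁ × n₂) (n₁ × n₂) ℂ) (c d : n₂) : Matrix n₁ n₁ ℂ :=
  Matrix.of fun x y => Z (x, c) (y, d)

/-- The partial contraction of `Z` against `A` in the first factor. -/
noncomputable def pT (A : Matrix n₁ n₁ ℂ) (Z : Matrix (n₁ × n₂) (n₁ × n₂) ℂ) : Matrix n₂ n₂ ℂ :=
  Matrix.of fun c d => (A * msli Z c d).trace

lemma kron_trace_eq (A : Matrix n₁ n₁ ℂ) (B : Matrix n₂ n₂ ℂ)
    (Z : Matrix (n₁ × n₂) (n₁ × n₂) ℂ) :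
    ((A ⊗ₖ B) * Z).trace = (B * pT A Z).trace := by
  simp only [Matrix.trace, Matrix.diag, Matrix.mul_apply, kroneckerMap_apply, pT, msli,
    Matrix.of_apply, Fintype.sum_prod_type, Finset.mul_sum]
  rw [Finset.sum_comm]
  refine Finset.sum_congr rfl fun i₂ _ => ?_
  rw [Finset.sum_congr rfl (fun (i₁ : n₁) _ => Finset.sum_comm
    (f := fun (j₁ : n₁) (j₂ : n₂) => A i₁ j₁ * B i₂ j₂ * Z (j₁, j₂) (i₁, i₂))), Finset.sum_comm]
  refine Finset.sum_congr rfl fun j₂ _ => Finset.sum_congr rfl fun i₁ _ =>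
    Finset.sum_congr rfl fun j₁ _ => by ring

lemma sum_nsq_msli (Z : Matrix (n₁ × n₂) (n₁ × n₂) ℂ) :
    ∑ c, ∑ d, nsq (msli Z c d) = nsq Z := by
  simp only [nsq, msli, Matrix.of_apply, Fintype.sum_prod_type]
  rw [Finset.sum_congr rfl (fun (c : n₂) _ => Finset.sum_comm
    (f := fun (d : n₂) (x : n₁) => ∑ y, ‖Z (x, c) (y, d)‖ ^ 2)), Finset.sum_comm]
  refine Finset.sum_congr rfl fun x _ => Finset.sum_congr rfl fun c _ => Finset.sum_comm
    (f := fun (d : n₂) (y : n₁) => ‖Z (x, c) (y, d)‖ ^ 2)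

lemma kron_conjTranspose (X : Matrix n₁ n₁ ℂ) (Y : Matrix n₂ n₂ ℂ) :
    (X ⊗ₖ Y)ᴴ = Xᴴ ⊗ₖ Yᴴ := by
  ext p q
  simp [Matrix.conjTranspose_apply, kroneckerMap_apply]

lemma nsq_pT (A : Matrix n₁ n₁ ℂ) (Z : Matrix (n₁ × n₂) (n₁ × n₂) ℂ) :
    nsq (pT A Z) = ∑ c, ∑ d, ‖(A * msli Z c d).trace‖ ^ 2 := rfl

end Kron

section Main
variable {n₁ n₂ α β : Type*} [Fintype n₁] [Fintype n₂] [Fintype α] [Fintype β]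
  [DecidableEq n₁] [DecidableEq n₂]
variable (A : α → Matrix n₁ n₁ ℂ) (B : β → Matrix n₂ n₂ ℂ)

lemma kron_trace_re (hApsd : ∀ a, (A a).PosSemidef) (hBpsd : ∀ b, (B b).PosSemidef)
    (a : α) (b : β) :
    ((A a ⊗ₖ B b).trace).re = ((A a).trace).re * ((B b).trace).re := by
  rw [Matrix.trace_kronecker, (psd_trace_eq (hApsd a)).1, (psd_trace_eq (hBpsd b)).1]
  push_cast
  simp

/-- Lower bound: for every `Z`, `s(A) s(B) ‖Z‖² ≤ Q_{A⊗B}(Z)`. -/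
lemma kron_Qf_ge (hApsd : ∀ a, (A a).PosSemidef) (hAne : ∀ a, A a ≠ 0)
    (hBpsd : ∀ b, (B b).PosSemidef)
    (Z : Matrix (n₁ × n₂) (n₁ × n₂) ℂ) :
    stab A * stab B * nsq Z ≤ Qf (fun p : α × β => A p.1 ⊗ₖ B p.2) Z := by
  have hta : ∀ a, 0 < ((A a).trace).re := fun a => psd_trace_re_pos (hApsd a) (hAne a)
  have step1 : Qf (fun p : α × β => A p.1 ⊗ₖ B p.2) Z
      = ∑ a, Qf B (pT (A a) Z) / ((A a).trace).re := by
    unfold Qf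
    rw [Fintype.sum_prod_type]
    refine Finset.sum_congr rfl fun a _ => ?_
    rw [Finset.sum_div]
    refine Finset.sum_congr rfl fun b _ => ?_
    rw [kron_trace_eq, kron_trace_re A B hApsd hBpsd, mul_comm, ← div_div]
  rw [step1]
  have step2 : ∑ a, (stab B * nsq (pT (A a) Z)) / ((A a).trace).re
      ≤ ∑ a, Qf B (pT (A a) Z) / ((A a).trace).re := by
    refine Finset.sum_le_sum fun a _ => ?_
    exact (div_le_div_iff_of_pos_right (hta a)).mpr (stab_le_Qf B hBpsd (pT (A a) Z))
  refine le_trans ?_ step2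
  have step3 : ∑ a, (stab B * nsq (pT (A a) Z)) / ((A a).trace).re
      = stab B * ∑ c, ∑ d, Qf A (msli Z c d) := by
    have : ∀ a, (stab B * nsq (pT (A a) Z)) / ((A a).trace).re
        = stab B * ∑ c, ∑ d, ‖(A a * msli Z c d).trace‖ ^ 2 / ((A a).trace).re := by
      intro a
      rw [nsq_pT, mul_div_assoc, Finset.sum_div]
      congr 1
      refine Finset.sum_congr rfl fun c _ => ?_
      rw [Finset.sum_div]
    simp only [this]
    rw [← Finset.mul_sum]
    congr 1
    rw [Finset.sum_comm]
    refine Finset.sum_congr rfl fun c _ => ?_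
    rw [Finset.sum_comm]
    rfl
  rw [step3]
  have step4 : ∑ c, ∑ d, (stab A * nsq (msli Z c d)) ≤ ∑ c, ∑ d, Qf A (msli Z c d) :=
    Finset.sum_le_sum fun c _ => Finset.sum_le_sum fun d _ => stab_le_Qf A hApsd _
  have step5 : ∑ c, ∑ d, (stab A * nsq (msli Z c d)) = stab A * nsq Z := by
    simp only [← Finset.mul_sum]
    rw [sum_nsq_msli]
  calc stab A * stab B * nsq Z = stab B * (stab A * nsq Z) := by ring
    _ = stab B * ∑ c, ∑ d, (stab A * nsq (msli Z c d)) := by rw [step5]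
    _ ≤ stab B * ∑ c, ∑ d, Qf A (msli Z c d) :=
        mul_le_mul_of_nonneg_left step4 (stab_nonneg B hBpsd)

/-- Product value: `Q_{A⊗B}(X ⊗ Y) = Q_A(X) Q_B(Y)`. -/
lemma kron_Qf_prod (hApsd : ∀ a, (A a).PosSemidef) (hBpsd : ∀ b, (B b).PosSemidef)
    (X : Matrix n₁ n₁ ℂ) (Y : Matrix n₂ n₂ ℂ) :
    Qf (fun p : α × β => A p.1 ⊗ₖ B p.2) (X ⊗ₖ Y) = Qf A X * Qf B Y := by
  unfold Qf
  rw [Finset.sum_mul_sum, Fintype.sum_prod_type]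
  refine Finset.sum_congr rfl fun a _ => Finset.sum_congr rfl fun b _ => ?_
  rw [← Matrix.mul_kronecker_mul, Matrix.trace_kronecker, kron_trace_re A B hApsd hBpsd,
    norm_mul, mul_pow, div_mul_div_comm]

end Main


lemma kron_posSemidef {n₁ n₂ : Type*} [Fintype n₁] [Fintype n₂] [DecidableEq n₁] [DecidableEq n₂]
    {A : Matrix n₁ n₁ ℂ} {B : Matrix n₂ n₂ ℂ}
    (hA : A.PosSemidef) (hB : B.PosSemidef) : (A ⊗ₖ B).PosSemidef := by
  obtain ⟨C, rfl⟩ := Matrix.posSemidef_iff_eq_transpose_mul_self.mp hA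
  obtain ⟨D, rfl⟩ := Matrix.posSemidef_iff_eq_transpose_mul_self.mp hB
  refine Matrix.posSemidef_iff_eq_transpose_mul_self.mpr ⟨C ⊗ₖ D, ?_⟩
  rw [kron_conjTranspose, ← Matrix.mul_kronecker_mul]

lemma nsq_stdBasis {n : Type*} [Fintype n] [DecidableEq n] (i : n) :
    nsq (Matrix.single i i (1 : ℂ)) = 1 := by
  simp only [nsq, Matrix.single, Matrix.of_apply]
  rw [Finset.sum_eq_single i, Finset.sum_eq_single i]
  · simp
  · intro b _ hb; simp [hb, Ne.symm hb]
  · intro h; exact absurd (Finset.mem_univ i) h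
  · intro b _ hb
    refine Finset.sum_eq_zero fun c _ => ?_
    simp [Ne.symm hb]
  · intro h; exact absurd (Finset.mem_univ i) h

lemma stab_set_nonempty {n ι : Type*} [Fintype n] [DecidableEq n] [Nonempty n] [Fintype ι]
    (A : ι → Matrix n n ℂ) :
    ({r : ℝ | ∃ X : Matrix n n ℂ, (Xᴴ * X).trace = 1 ∧
      r = ∑ a, ‖(A a * X).trace‖ ^ 2 / ((A a).trace).re}).Nonempty := by
  obtain ⟨i⟩ := ‹Nonempty n›
  refine ⟨_, Matrix.single i i (1 : ℂ), ?_, rfl⟩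
  rw [trace_conjTranspose_mul_self, nsq_stdBasis, Complex.ofReal_one]

lemma real_le_of_forall_pos_le_add {x y : ℝ} (h : ∀ ε : ℝ, 0 < ε → x ≤ y + ε) : x ≤ y := by
  by_contra hxy
  push_neg at hxy
  have := h ((x - y) / 2) (by linarith)
  linarith

/-- For POVMs `(A_a)` on `ℂ^{d₁}` and `(B_b)` on `ℂ^{d₂}` with nonzero
effects, the product POVM `(A_a ⊗ B_b)` satisfies `s(A ⊗ B) = s(A)·s(B)`, where `s`
denotes the completeness stability (the infimum of the scaled-frame quadratic form over
unit Hilbert–Schmidt-norm matrices). -/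
theorem completeness_stability_kronecker {d₁ d₂ : ℕ} {α β : Type*} [Fintype α] [Fintype β]
    (A : α → Matrix (Fin d₁) (Fin d₁) ℂ) (B : β → Matrix (Fin d₂) (Fin d₂) ℂ)
    (hApsd : ∀ a, (A a).PosSemidef) (hAsum : ∑ a, A a = 1) (hAne : ∀ a, A a ≠ 0)
    (hBpsd : ∀ b, (B b).PosSemidef) (hBsum : ∑ b, B b = 1) (hBne : ∀ b, B b ≠ 0) :
    sInf {r : ℝ | ∃ X : Matrix (Fin d₁ × Fin d₂) (Fin d₁ × Fin d₂) ℂ,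
        (Xᴴ * X).trace = 1 ∧
        r = ∑ p : α × β, ‖((A p.1 ⊗ₖ B p.2) * X).trace‖ ^ 2 /
          (((A p.1 ⊗ₖ B p.2)).trace).re} =
    (sInf {r : ℝ | ∃ X : Matrix (Fin d₁) (Fin d₁) ℂ, (Xᴴ * X).trace = 1 ∧
        r = ∑ a, ‖(A a * X).trace‖ ^ 2 / ((A a).trace).re}) *
    (sInf {r : ℝ | ∃ X : Matrix (Fin d₂) (Fin d₂) ℂ, (Xᴴ * X).trace = 1 ∧
        r = ∑ b, ‖(B b * X).trace‖ ^ 2 / ((B b).trace).re}) := by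
  rcases Nat.eq_zero_or_pos d₁ with h1 | h1
  · subst h1
    have e1 : {r : ℝ | ∃ X : Matrix (Fin 0 × Fin d₂) (Fin 0 × Fin d₂) ℂ,
        (Xᴴ * X).trace = 1 ∧
        r = ∑ p : α × β, ‖((A p.1 ⊗ₖ B p.2) * X).trace‖ ^ 2 /
          (((A p.1 ⊗ₖ B p.2)).trace).re} = ∅ := by
      ext r
      simp only [Set.mem_setOf_eq, Set.mem_empty_iff_false, iff_false]
      rintro ⟨X, hX, -⟩
      rw [show (Xᴴ * X).trace = 0 by simp [Matrix.trace]] at hX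
      exact zero_ne_one hX
    have e2 : {r : ℝ | ∃ X : Matrix (Fin 0) (Fin 0) ℂ, (Xᴴ * X).trace = 1 ∧
        r = ∑ a, ‖(A a * X).trace‖ ^ 2 / ((A a).trace).re} = ∅ := by
      ext r
      simp only [Set.mem_setOf_eq, Set.mem_empty_iff_false, iff_false]
      rintro ⟨X, hX, -⟩
      rw [show (Xᴴ * X).trace = 0 by simp [Matrix.trace]] at hX
      exact zero_ne_one hX
    rw [e1, e2, Real.sInf_empty, zero_mul]
  rcases Nat.eq_zero_or_pos d₂ with h2 | h2
  · subst h2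
    have e1 : {r : ℝ | ∃ X : Matrix (Fin d₁ × Fin 0) (Fin d₁ × Fin 0) ℂ,
        (Xᴴ * X).trace = 1 ∧
        r = ∑ p : α × β, ‖((A p.1 ⊗ₖ B p.2) * X).trace‖ ^ 2 /
          (((A p.1 ⊗ₖ B p.2)).trace).re} = ∅ := by
      ext r
      simp only [Set.mem_setOf_eq, Set.mem_empty_iff_false, iff_false]
      rintro ⟨X, hX, -⟩
      rw [show (Xᴴ * X).trace = 0 by simp [Matrix.trace]] at hX
      exact zero_ne_one hX
    have e2 : {r : ℝ | ∃ X : Matrix (Fin 0) (Fin 0) ℂ, (Xᴴ * X).trace = 1 ∧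
        r = ∑ b, ‖(B b * X).trace‖ ^ 2 / ((B b).trace).re} = ∅ := by
      ext r
      simp only [Set.mem_setOf_eq, Set.mem_empty_iff_false, iff_false]
      rintro ⟨X, hX, -⟩
      rw [show (Xᴴ * X).trace = 0 by simp [Matrix.trace]] at hX
      exact zero_ne_one hX
    rw [e1, e2, Real.sInf_empty, mul_zero]
  -- main case
  haveI : Nonempty (Fin d₁) := ⟨⟨0, h1⟩⟩
  haveI : Nonempty (Fin d₂) := ⟨⟨0, h2⟩⟩
  have hABpsd : ∀ p : α × β, (A p.1 ⊗ₖ B p.2).PosSemidef :=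
    fun p => kron_posSemidef (hApsd p.1) (hBpsd p.2)
  show stab (fun p : α × β => A p.1 ⊗ₖ B p.2) = stab A * stab B
  have hsA := stab_nonneg A hApsd
  have hsB := stab_nonneg B hBpsd
  apply le_antisymm
  · -- upper bound
    refine real_le_of_forall_pos_le_add fun ε hε => ?_
    set δ : ℝ := min 1 (ε / (stab A + stab B + 1)) with hδ
    have hδpos : 0 < δ := lt_min one_pos (div_pos hε (by linarith))
    have hδ1 : δ ≤ 1 := min_le_left _ _
    have hδ2 : δ * (stab A + stab B + 1) ≤ ε := by
      have h' : δ ≤ ε / (stab A + stab B + 1) := min_le_right _ _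
      calc δ * (stab A + stab B + 1) ≤ (ε / (stab A + stab B + 1)) * (stab A + stab B + 1) :=
            mul_le_mul_of_nonneg_right h' (by linarith)
        _ = ε := by field_simp
    obtain ⟨x, hxmem, hxlt⟩ := Real.lt_sInf_add_pos (stab_set_nonempty A) hδpos
    obtain ⟨y, hymem, hylt⟩ := Real.lt_sInf_add_pos (stab_set_nonempty B) hδpos
    have hx0 : 0 ≤ x := by
      obtain ⟨X, -, rfl⟩ := hxmem; exact Qf_nonneg A hApsd X
    have hy0 : 0 ≤ y := by
      obtain ⟨Y, -, rfl⟩ := hymem; exact Qf_nonneg B hBpsd Y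
    obtain ⟨X, hX1, rfl⟩ := hxmem
    obtain ⟨Y, hY1, rfl⟩ := hymem
    have hmem : (Qf A X * Qf B Y) ∈ {r : ℝ | ∃ Z : Matrix (Fin d₁ × Fin d₂) (Fin d₁ × Fin d₂) ℂ,
        (Zᴴ * Z).trace = 1 ∧
        r = ∑ p : α × β, ‖((A p.1 ⊗ₖ B p.2) * Z).trace‖ ^ 2 /
          (((A p.1 ⊗ₖ B p.2)).trace).re} := by
      refine ⟨X ⊗ₖ Y, ?_, ?_⟩
      · rw [kron_conjTranspose, ← Matrix.mul_kronecker_mul, Matrix.trace_kronecker,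
          hX1, hY1, mul_one]
      · exact (kron_Qf_prod A B hApsd hBpsd X Y).symm
    have hle := csInf_le (stab_bddBelow _ hABpsd) hmem
    refine hle.trans ?_
    have hQx : Qf A X ≤ stab A + δ := le_of_lt hxlt
    have hQy : Qf B Y ≤ stab B + δ := le_of_lt hylt
    calc Qf A X * Qf B Y ≤ (stab A + δ) * (stab B + δ) :=
          mul_le_mul hQx hQy hy0 (by linarith)
      _ ≤ stab A * stab B + ε := by nlinarith
  · -- lower bound
    refine le_csInf (stab_set_nonempty _) ?_
    rintro r ⟨Z, hZ, rfl⟩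
    have hnsq : nsq Z = 1 := by
      have h := (trace_conjTranspose_mul_self Z).symm.trans hZ
      exact_mod_cast h
    have h := kron_Qf_ge A B hApsd hAne hBpsd Z
    rw [hnsq, mul_one] at h
    exact h
end

section
/- Let (A_a)_{a=1,…,d²} be a POVM on ℂ^d whose d² effects are linearly independent as elements of the space of d×d matrices (an exact frame). Let S be a d²×d² column-stochastic real matrix (nonnegative entries, each column summing to 1), and define effects B_b = ∑_a S_{b,a} A_a, which form a POVM (B_b). Then det G(B) ≤ det G(A), where G(A) is the d²×d² Gram matrix with entries G(A)_{a,a'} = Tr(A_aᴴ A_{a'}); both determinants are nonnegative reals. That is, the determinant of the frame operator is a resource monotone on POVMs forming exact frames. -/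
open Matrix
open scoped ComplexOrder

private lemma colstoch_det_sq_le_one {n : ℕ} (S : Matrix (Fin n) (Fin n) ℝ)
    (hS0 : ∀ b a, 0 ≤ S b a) (hS1 : ∀ a, ∑ b, S b a = 1) : S.det ^ 2 ≤ 1 := by
  have habs : |S.det| ≤ 1 := by
    have h1 : |S.det| ≤ ∑ σ : Equiv.Perm (Fin n), ∏ i, S (σ i) i := by
      rw [Matrix.det_apply]
      refine (Finset.abs_sum_le_sum_abs _ _).trans ?_
      refine Finset.sum_le_sum fun σ _ => ?_
      have hp : 0 ≤ ∏ i, S (σ i) i := Finset.prod_nonneg fun i _ => hS0 _ _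
      rcases Int.units_eq_one_or (Equiv.Perm.sign σ) with h | h <;>
        simp [h, abs_of_nonneg hp]
    have h2 : ∑ σ : Equiv.Perm (Fin n), ∏ i, S (σ i) i
        ≤ ∑ g : Fin n → Fin n, ∏ i, S (g i) i := by
      have hinj : Set.InjOn (fun σ : Equiv.Perm (Fin n) => ⇑σ)
          (Finset.univ : Finset (Equiv.Perm (Fin n))) := by
        intro σ _ τ _ h
        exact Equiv.coe_fn_injective h
      rw [← Finset.sum_image (f := fun g : Fin n → Fin n => ∏ i, S (g i) i)
        (fun σ hσ τ hτ h => hinj hσ hτ h)]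
      refine Finset.sum_le_sum_of_subset_of_nonneg (Finset.subset_univ _) ?_
      intro g _ _
      exact Finset.prod_nonneg fun i _ => hS0 _ _
    have h3 : ∑ g : Fin n → Fin n, ∏ i, S (g i) i = 1 := by
      have := Finset.prod_univ_sum (fun _ : Fin n => (Finset.univ : Finset (Fin n)))
        (fun i j => S j i)
      rw [Fintype.sum_congr _ _ (fun g => rfl)]
      calc ∑ g : Fin n → Fin n, ∏ i, S (g i) i
          = ∑ g ∈ Fintype.piFinset (fun _ : Fin n => (Finset.univ : Finset (Fin n))),
            ∏ i, S (g i) i := by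
            rw [Fintype.piFinset_univ]
        _ = ∏ i, ∑ j, S j i := this.symm
        _ = 1 := by simp [hS1]
    have := h1.trans (h2.trans_eq h3)
    exact this
  calc S.det ^ 2 = |S.det| ^ 2 := (sq_abs _).symm
    _ ≤ 1 ^ 2 := by
        exact pow_le_pow_left₀ (abs_nonneg _) habs 2
    _ = 1 := one_pow 2

/-- Let `(A_a)_{a=1,…,d²}` be a POVM on `ℂ^d` whose `d²` effects are
linearly independent (an exact frame), let `S` be a `d² × d²` column-stochastic real
matrix, and let `B_b = ∑_a S_{b,a} A_a` be the post-processed POVM.  Then the Gram-matrix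
(frame-operator) determinants satisfy `0 ≤ det G(B) ≤ det G(A)`, where
`G(A)_{a,a'} = Tr(A_aᴴ A_{a'})`: the determinant of the frame operator is a resource
monotone on POVMs forming exact frames. -/
theorem frame_operator_det_monotone {d : ℕ}
    (A : Fin (d ^ 2) → Matrix (Fin d) (Fin d) ℂ)
    (hpsd : ∀ a, (A a).PosSemidef) (hsum : ∑ a, A a = 1)
    (hli : LinearIndependent ℂ A)
    (S : Matrix (Fin (d ^ 2)) (Fin (d ^ 2)) ℝ)
    (hS0 : ∀ b a, 0 ≤ S b a) (hS1 : ∀ a, ∑ b, S b a = 1)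
    (B : Fin (d ^ 2) → Matrix (Fin d) (Fin d) ℂ)
    (hB : ∀ b, B b = ∑ a, (S b a : ℂ) • A a) :
    0 ≤ (Matrix.of fun b b' => ((B b)ᴴ * B b').trace).det ∧
    (Matrix.of fun b b' => ((B b)ᴴ * B b').trace).det ≤
      (Matrix.of fun a a' => ((A a)ᴴ * A a').trace).det := by
  set G : Matrix (Fin (d ^ 2)) (Fin (d ^ 2)) ℂ :=
    Matrix.of fun a a' => ((A a)ᴴ * A a').trace with hGdef
  -- G is a Gram matrix, hence PSD
  set M : Matrix (Fin d × Fin d) (Fin (d ^ 2)) ℂ :=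
    Matrix.of fun p a => A a p.1 p.2 with hMdef
  have hG : G = Mᴴ * M := by
    ext a a'
    simp only [hGdef, hMdef, Matrix.of_apply, Matrix.mul_apply, Matrix.trace,
      Matrix.diag_apply, Matrix.conjTranspose_apply]
    rw [← Finset.univ_product_univ, ← Finset.sum_product']
    exact Fintype.sum_equiv (Equiv.prodComm _ _) _ _ (fun p => rfl)
  have hGpsd : G.PosSemidef := hG ▸ Matrix.posSemidef_conjTranspose_mul_self M
  have hGdet : 0 ≤ G.det := by
    rw [hGpsd.isHermitian.det_eq_prod_eigenvalues]
    exact Finset.prod_nonneg fun i _ =>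
      RCLike.ofReal_nonneg.mpr (hGpsd.eigenvalues_nonneg i)
  set Sc : Matrix (Fin (d ^ 2)) (Fin (d ^ 2)) ℂ := S.map (Complex.ofReal) with hScdef
  have hGB : (Matrix.of fun b b' => ((B b)ᴴ * B b').trace) = Sc * G * Scᵀ := by
    ext b b'
    simp only [Matrix.of_apply, hB]
    rw [Matrix.conjTranspose_sum, Finset.sum_mul]
    rw [Matrix.trace_sum]
    simp only [Matrix.conjTranspose_smul, Finset.mul_sum, Matrix.mul_sum,
      Matrix.trace_sum, Matrix.smul_mul, Matrix.mul_smul, Matrix.trace_smul,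
      smul_smul, smul_eq_mul]
    simp only [Matrix.mul_apply, Matrix.transpose_apply, hScdef, Matrix.map_apply,
      hGdef, Matrix.of_apply, Finset.sum_mul, Finset.mul_sum]
    rw [Finset.sum_comm]
    refine Finset.sum_congr rfl fun a _ => Finset.sum_congr rfl fun a' _ => ?_
    simp [Complex.star_def, Complex.conj_ofReal]
    ring
  have hdetB : (Matrix.of fun b b' => ((B b)ᴴ * B b').trace).det
      = ((S.det : ℂ)) ^ 2 * G.det := by
    rw [hGB, Matrix.det_mul, Matrix.det_mul, Matrix.det_transpose]
    have hdetSc : Sc.det = (S.det : ℂ) := by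
      rw [hScdef, show S.map Complex.ofReal = Complex.ofRealHom.mapMatrix S from rfl,
        ← RingHom.map_det]
      rfl
    rw [hdetSc]
    ring
  have hsq0 : (0 : ℂ) ≤ ((S.det : ℂ)) ^ 2 := by
    rw [← Complex.ofReal_pow, Complex.zero_le_real]
    positivity
  have hsq1 : ((S.det : ℂ)) ^ 2 ≤ 1 := by
    rw [← Complex.ofReal_pow, ← Complex.ofReal_one, Complex.real_le_real]
    exact colstoch_det_sq_le_one S hS0 hS1
  constructor
  · rw [hdetB]
    exact mul_nonneg hsq0 hGdet
  · rw [hdetB]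
    calc ((S.det : ℂ)) ^ 2 * G.det ≤ 1 * G.det :=
      mul_le_mul_of_nonneg_right hsq1 hGdet
    _ = G.det := one_mul _
end

section
/- Let 0 < a < 1 and consider the qubit POVM with six effects: ((1−a)/2)|+x⟩⟨+x|, ((1−a)/2)|−x⟩⟨−x|, ((1−a)/2)|+y⟩⟨+y|, ((1−a)/2)|−y⟩⟨−y|, a|+z⟩⟨+z|, a|−z⟩⟨−z|, where |±x⟩, |±y⟩, |±z⟩ are the eigenvectors of the Pauli matrices σ_x, σ_y, σ_z. Then its completeness stability equals min(a, (1−a)/2). -/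
open Matrix
open scoped ComplexOrder

lemma proj_eq' (v : Fin 2 → ℂ) (c : ℂ) (hc : (starRingEnd ℂ) c * c = 1)
    (h1 : v 1 = c * v 0)
    (hn : (starRingEnd ℂ) (v 0) * v 0 + (starRingEnd ℂ) (v 1) * v 1 = 1) :
    vecMulVec v (star v) = !![(1/2 : ℂ), (starRingEnd ℂ) c / 2; c/2, (1/2 : ℂ)] := by
  have hv : v 0 * (starRingEnd ℂ) (v 0) = 1/2 := by
    rw [h1, _root_.map_mul] at hn
    linear_combination hn / 2 - (v 0 * (starRingEnd ℂ) (v 0)) / 2 * hc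
  ext i j
  fin_cases i <;> fin_cases j <;>
    simp only [vecMulVec_apply, h1, _root_.map_mul, Pi.star_apply, RCLike.star_def,
      cons_val', cons_val_zero, cons_val_one, head_cons, head_fin_const, empty_val',
      cons_val_fin_one, Fin.mk_zero, Fin.mk_one, of_apply] <;>
    first
      | linear_combination hv
      | linear_combination (starRingEnd ℂ) c * hv
      | linear_combination c * hv
      | linear_combination (c * (starRingEnd ℂ) c) * hv + hc / 2

lemma norm_sq_smul' (r : ℝ) (hr : 0 ≤ r) (z : ℂ) :
    ‖((r:ℂ)) * z‖^2 = r^2 * Complex.normSq z := by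
  rw [norm_mul, mul_pow, Complex.norm_real, Real.norm_eq_abs, _root_.abs_of_nonneg hr,
    Complex.sq_norm]

set_option maxHeartbeats 1600000 in
/-- For `0 < a < 1`, the qubit POVM with the six effects
`((1−a)/2)|±x⟩⟨±x|`, `((1−a)/2)|±y⟩⟨±y|`, `a|±z⟩⟨±z|` (where `|±x⟩, |±y⟩, |±z⟩` are
normalized `±1`-eigenvectors of the Pauli matrices) has completeness stability
`min(a, (1−a)/2)`. -/
theorem qubit_povm_completeness_stability (a : ℝ) (ha0 : 0 < a) (ha1 : a < 1)
    (xp xm yp ym zp zm : Fin 2 → ℂ)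
    (hxpn : star xp ⬝ᵥ xp = 1) (hxmn : star xm ⬝ᵥ xm = 1)
    (hypn : star yp ⬝ᵥ yp = 1) (hymn : star ym ⬝ᵥ ym = 1)
    (hzpn : star zp ⬝ᵥ zp = 1) (hzmn : star zm ⬝ᵥ zm = 1)
    (hxp : !![0, 1; 1, 0] *ᵥ xp = xp) (hxm : !![0, 1; 1, 0] *ᵥ xm = -xm)
    (hyp : !![0, -Complex.I; Complex.I, 0] *ᵥ yp = yp)
    (hym : !![0, -Complex.I; Complex.I, 0] *ᵥ ym = -ym)
    (hzp : !![1, 0; 0, -1] *ᵥ zp = zp) (hzm : !![1, 0; 0, -1] *ᵥ zm = -zm)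
    (A : Fin 6 → Matrix (Fin 2) (Fin 2) ℂ)
    (hA : A = ![(((1 - a) / 2 : ℝ) : ℂ) • vecMulVec xp (star xp),
                (((1 - a) / 2 : ℝ) : ℂ) • vecMulVec xm (star xm),
                (((1 - a) / 2 : ℝ) : ℂ) • vecMulVec yp (star yp),
                (((1 - a) / 2 : ℝ) : ℂ) • vecMulVec ym (star ym),
                ((a : ℝ) : ℂ) • vecMulVec zp (star zp),
                ((a : ℝ) : ℂ) • vecMulVec zm (star zm)]) :
    sInf {r : ℝ | ∃ X : Matrix (Fin 2) (Fin 2) ℂ, (Xᴴ * X).trace = 1 ∧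
        r = ∑ i, ‖(A i * X).trace‖ ^ 2 / ((A i).trace).re} =
      min a ((1 - a) / 2) := by
  -- component facts
  have e1 := congrFun hxp 0
  have e2 := congrFun hxm 0
  have e3 := congrFun hyp 0
  have e4 := congrFun hym 0
  have e5 := congrFun hzp 1
  have e6 := congrFun hzm 0
  simp [Matrix.mulVec, dotProduct, Fin.sum_univ_two] at e1 e2 e3 e4 e5 e6 hxpn hxmn hypn hymn hzpn hzmn
  -- explicit projectors
  have hPxp : vecMulVec xp (star xp) = !![(1/2:ℂ), 1/2; 1/2, 1/2] := by
    have := proj_eq' xp 1 (by simp) (by rw [one_mul]; exact e1) hxpn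
    simpa using this
  have hPxm : vecMulVec xm (star xm) = !![(1/2:ℂ), -(1/2); -(1/2), 1/2] := by
    have := proj_eq' xm (-1) (by simp) (by rw [neg_one_mul]; exact e2) hxmn
    rw [this]; norm_num
  have hPyp : vecMulVec yp (star yp)
      = !![(1/2:ℂ), -Complex.I/2; Complex.I/2, 1/2] := by
    have h1 : yp 1 = Complex.I * yp 0 := by
      linear_combination Complex.I * e3 + yp 1 * Complex.I_sq
    have := proj_eq' yp Complex.I (by simp [Complex.conj_I, Complex.I_mul_I]) h1 hypn
    simpa [Complex.conj_I] using this
  have hPym : vecMulVec ym (star ym)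
      = !![(1/2:ℂ), Complex.I/2; -Complex.I/2, 1/2] := by
    have h1 : ym 1 = -Complex.I * ym 0 := by
      linear_combination -Complex.I * e4 + ym 1 * Complex.I_sq
    have := proj_eq' ym (-Complex.I) (by simp [Complex.conj_I, Complex.I_mul_I]) h1 hymn
    simpa [Complex.conj_I] using this
  have hPzp : vecMulVec zp (star zp) = !![(1:ℂ), 0; 0, 0] := by
    have hz1 : zp 1 = 0 := by linear_combination -e5/2
    rw [hz1] at hzpn
    ext i j
    fin_cases i <;> fin_cases j <;>
      simp [vecMulVec_apply, hz1] <;> linear_combination hzpn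
  have hPzm : vecMulVec zm (star zm) = !![(0:ℂ), 0; 0, 1] := by
    have hz0 : zm 0 = 0 := by linear_combination e6/2
    rw [hz0] at hzmn
    ext i j
    fin_cases i <;> fin_cases j <;>
      simp [vecMulVec_apply, hz0] <;> linear_combination hzmn
  -- explicit effects
  have hA0 : A 0 = (((1 - a)/2:ℝ):ℂ) • !![(1/2:ℂ), 1/2; 1/2, 1/2] := by
    rw [hA]; simp [hPxp]
  have hA1 : A 1 = (((1 - a)/2:ℝ):ℂ) • !![(1/2:ℂ), -(1/2); -(1/2), 1/2] := by
    rw [hA]; simp [hPxm]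
  have hA2 : A 2 = (((1 - a)/2:ℝ):ℂ) • !![(1/2:ℂ), -Complex.I/2; Complex.I/2, 1/2] := by
    rw [hA]; simp [hPyp]
  have hA3 : A 3 = (((1 - a)/2:ℝ):ℂ) • !![(1/2:ℂ), Complex.I/2; -Complex.I/2, 1/2] := by
    rw [hA]; simp [hPym]
  have hA4 : A 4 = ((a:ℝ):ℂ) • !![(1:ℂ), 0; 0, 0] := by
    rw [hA]; simp [hPzp]
  have hA5 : A 5 = ((a:ℝ):ℂ) • !![(0:ℂ), 0; 0, 1] := by
    rw [hA]
    show ((a:ℝ):ℂ) • vecMulVec zm (star zm) = _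
    rw [hPzm]
  have hane : a ≠ 0 := ne_of_gt ha0
  have hpne : (1-a)/2 ≠ 0 := by intro h; rw [div_eq_zero_iff] at h; rcases h with h|h <;> linarith
  have q4 : (0:ℝ) ≤ (1-a)/4 := by linarith
  -- evaluation of the quadratic form
  have hQ : ∀ X : Matrix (Fin 2) (Fin 2) ℂ,
      ∑ i, ‖(A i * X).trace‖^2 / ((A i).trace).re
      = (1-a)/8 * Complex.normSq (X 0 0 + X 1 1 + (X 0 1 + X 1 0))
      + (1-a)/8 * Complex.normSq (X 0 0 + X 1 1 - (X 0 1 + X 1 0))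
      + (1-a)/8 * Complex.normSq (X 0 0 + X 1 1 + Complex.I * (X 0 1 - X 1 0))
      + (1-a)/8 * Complex.normSq (X 0 0 + X 1 1 - Complex.I * (X 0 1 - X 1 0))
      + a * Complex.normSq (X 0 0) + a * Complex.normSq (X 1 1) := by
    intro X
    have hT0 : (A 0 * X).trace
        = (((1-a)/4:ℝ):ℂ) * (X 0 0 + X 1 1 + (X 0 1 + X 1 0)) := by
      rw [hA0]
      simp [Matrix.trace_fin_two, Matrix.mul_apply, Fin.sum_univ_two, Matrix.vecMul, dotProduct]
      ring
    have hT1 : (A 1 * X).trace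
        = (((1-a)/4:ℝ):ℂ) * (X 0 0 + X 1 1 - (X 0 1 + X 1 0)) := by
      rw [hA1]
      simp [Matrix.trace_fin_two, Matrix.mul_apply, Fin.sum_univ_two, Matrix.vecMul, dotProduct]
      ring
    have hT2 : (A 2 * X).trace
        = (((1-a)/4:ℝ):ℂ) * (X 0 0 + X 1 1 + Complex.I * (X 0 1 - X 1 0)) := by
      rw [hA2]
      simp [Matrix.trace_fin_two, Matrix.mul_apply, Fin.sum_univ_two, Matrix.vecMul, dotProduct]
      ring
    have hT3 : (A 3 * X).trace
        = (((1-a)/4:ℝ):ℂ) * (X 0 0 + X 1 1 - Complex.I * (X 0 1 - X 1 0)) := by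
      rw [hA3]
      simp [Matrix.trace_fin_two, Matrix.mul_apply, Fin.sum_univ_two, Matrix.vecMul, dotProduct]
      ring
    have hT4 : (A 4 * X).trace = ((a:ℝ):ℂ) * X 0 0 := by
      rw [hA4]
      simp [Matrix.trace_fin_two, Matrix.mul_apply, Fin.sum_univ_two, Matrix.vecMul, dotProduct]
    have hT5 : (A 5 * X).trace = ((a:ℝ):ℂ) * X 1 1 := by
      rw [hA5]
      simp [Matrix.trace_fin_two, Matrix.mul_apply, Fin.sum_univ_two, Matrix.vecMul, dotProduct]
    have hR0 : ((A 0).trace).re = (1-a)/2 := by rw [hA0]; simp [Matrix.trace_fin_two]; ring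
    have hR1 : ((A 1).trace).re = (1-a)/2 := by rw [hA1]; simp [Matrix.trace_fin_two]; ring
    have hR2 : ((A 2).trace).re = (1-a)/2 := by rw [hA2]; simp [Matrix.trace_fin_two]; ring
    have hR3 : ((A 3).trace).re = (1-a)/2 := by rw [hA3]; simp [Matrix.trace_fin_two]; ring
    have hR4 : ((A 4).trace).re = a := by rw [hA4]; simp [Matrix.trace_fin_two]
    have hR5 : ((A 5).trace).re = a := by rw [hA5]; simp [Matrix.trace_fin_two]
    rw [Fin.sum_univ_six, hT0, hT1, hT2, hT3, hT4, hT5, hR0, hR1, hR2, hR3, hR4, hR5,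
      norm_sq_smul' _ q4, norm_sq_smul' _ q4, norm_sq_smul' _ q4, norm_sq_smul' _ q4,
      norm_sq_smul' _ ha0.le, norm_sq_smul' _ ha0.le]
    have key : ∀ n : ℝ, ((1-a)/4)^2 * n / ((1-a)/2) = (1-a)/8 * n := by
      intro n; rw [div_eq_iff hpne]; ring
    have key2 : ∀ n : ℝ, a^2 * n / a = a * n := by
      intro n; rw [div_eq_iff hane]; ring
    rw [key, key, key, key, key2, key2]
  -- the normalization in real terms
  have hN : ∀ X : Matrix (Fin 2) (Fin 2) ℂ, (Xᴴ * X).trace = 1 →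
      Complex.normSq (X 0 0) + Complex.normSq (X 0 1) + Complex.normSq (X 1 0)
        + Complex.normSq (X 1 1) = 1 := by
    intro X hX
    have h := congrArg Complex.re hX
    simp only [Matrix.trace_fin_two, Matrix.mul_apply, Fin.sum_univ_two,
      Matrix.conjTranspose_apply, RCLike.star_def, Complex.add_re, Complex.mul_re,
      Complex.conj_re, Complex.conj_im, Complex.one_re] at h
    simp only [Complex.normSq_apply]
    linarith [h]
  -- lower bound
  have hLB : ∀ r ∈ {r : ℝ | ∃ X : Matrix (Fin 2) (Fin 2) ℂ, (Xᴴ * X).trace = 1 ∧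
      r = ∑ i, ‖(A i * X).trace‖ ^ 2 / ((A i).trace).re}, min a ((1 - a) / 2) ≤ r := by
    rintro r ⟨X, hX1, rfl⟩
    rw [hQ X]
    have hn := hN X hX1
    simp only [Complex.normSq_apply, Complex.add_re, Complex.add_im, Complex.sub_re,
      Complex.sub_im, Complex.mul_re, Complex.mul_im, Complex.I_re, Complex.I_im] at hn ⊢
    rcases le_total a ((1 - a) / 2) with h | h
    · rw [min_eq_left h]
      nlinarith [sq_nonneg ((X 0 0).re + (X 1 1).re), sq_nonneg ((X 0 0).im + (X 1 1).im),
        mul_nonneg (by linarith : (0:ℝ) ≤ (1 - a) / 2 - a)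
          (by nlinarith [mul_self_nonneg (X 0 1).re, mul_self_nonneg (X 0 1).im,
              mul_self_nonneg (X 1 0).re, mul_self_nonneg (X 1 0).im] :
            (0:ℝ) ≤ (X 0 1).re * (X 0 1).re + (X 0 1).im * (X 0 1).im
            + (X 1 0).re * (X 1 0).re + (X 1 0).im * (X 1 0).im)]
    · rw [min_eq_right h]
      nlinarith [sq_nonneg ((X 0 0).re + (X 1 1).re), sq_nonneg ((X 0 0).im + (X 1 1).im),
        mul_nonneg (by linarith : (0:ℝ) ≤ a - (1 - a) / 2)
          (by nlinarith [mul_self_nonneg (X 0 0).re, mul_self_nonneg (X 0 0).im,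
              mul_self_nonneg (X 1 1).re, mul_self_nonneg (X 1 1).im] :
            (0:ℝ) ≤ (X 0 0).re * (X 0 0).re + (X 0 0).im * (X 0 0).im
            + (X 1 1).re * (X 1 1).re + (X 1 1).im * (X 1 1).im)]
  -- membership
  have hx2 : (Real.sqrt 2)⁻¹ * (Real.sqrt 2)⁻¹ = (1:ℝ)/2 := by
    rw [← mul_inv, Real.mul_self_sqrt (by norm_num : (0:ℝ) ≤ 2)]; norm_num
  have hmem : min a ((1 - a) / 2) ∈ {r : ℝ | ∃ X : Matrix (Fin 2) (Fin 2) ℂ, (Xᴴ * X).trace = 1 ∧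
      r = ∑ i, ‖(A i * X).trace‖ ^ 2 / ((A i).trace).re} := by
    rcases le_total a ((1 - a) / 2) with h | h
    · refine ⟨!![(((Real.sqrt 2)⁻¹:ℝ):ℂ), 0; 0, -(((Real.sqrt 2)⁻¹:ℝ):ℂ)], ?_, ?_⟩
      · simp [Matrix.trace_fin_two, Matrix.mul_apply, Fin.sum_univ_two,
          Matrix.conjTranspose_apply, Complex.conj_ofReal, ← Complex.ofReal_mul]
        norm_cast
        rw [hx2]; norm_num
      · rw [hQ, min_eq_left h]
        simp [Complex.normSq_ofReal]
        ring
    · refine ⟨!![0, (((Real.sqrt 2)⁻¹:ℝ):ℂ); (((Real.sqrt 2)⁻¹:ℝ):ℂ), 0], ?_, ?_⟩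
      · simp [Matrix.trace_fin_two, Matrix.mul_apply, Fin.sum_univ_two,
          Matrix.conjTranspose_apply, Complex.conj_ofReal, ← Complex.ofReal_mul]
        norm_cast
        rw [hx2]; norm_num
      · rw [hQ, min_eq_right h]
        have hns : Complex.normSq ((((Real.sqrt 2 : ℝ):ℂ))⁻¹ * 2) = 2 := by
          rw [Complex.normSq_mul, Complex.normSq_inv, Complex.normSq_ofReal,
            Real.mul_self_sqrt (by norm_num : (0:ℝ) ≤ 2)]
          norm_num [Complex.normSq_ofNat]
        have e : (((Real.sqrt 2:ℝ):ℂ))⁻¹ + (((Real.sqrt 2:ℝ):ℂ))⁻¹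
            = (((Real.sqrt 2:ℝ):ℂ))⁻¹ * 2 := by ring
        have e2 : -(((Real.sqrt 2:ℝ):ℂ))⁻¹ + -(((Real.sqrt 2:ℝ):ℂ))⁻¹
            = -((((Real.sqrt 2:ℝ):ℂ))⁻¹ * 2) := by ring
        norm_num
        rw [e, e2, Complex.normSq_neg, hns]
        ring
  exact le_antisymm (csInf_le ⟨_, hLB⟩ hmem) (le_csInf ⟨_, hmem⟩ hLB)
end

section
/- Let (A_a) be an informationally complete POVM on ℂ^d with every effect nonzero, and let f be the scaled frame operator, i.e. the linear map on the space of d×d complex matrices defined by f(X) = ∑_a (Tr(A_a X)/Tr(A_a)) · A_a. Suppose the completeness stability s(A) = inf{Q_A(X) : Tr(XᴴX) = 1} is positive. Then f is bijective, the trace of its inverse f⁻¹ (as a linear endomorphism of the d²-dimensional matrix space) is a real number, and Tr(f⁻¹) ≤ (d² − 1)/s(A) + 1. -/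
open Matrix
open scoped ComplexOrder InnerProductSpace

noncomputable def matEuc (d : ℕ) : Matrix (Fin d) (Fin d) ℂ ≃ₗ[ℂ] EuclideanSpace ℂ (Fin d × Fin d) :=
  { toFun := fun X => WithLp.toLp 2 (fun p => X p.1 p.2)
    invFun := fun v => Matrix.of fun i j => v (i, j)
    map_add' := fun _ _ => rfl
    map_smul' := fun _ _ => rfl
    left_inv := fun _ => rfl
    right_inv := fun _ => rfl }

@[simp] lemma matEuc_apply {d : ℕ} (X : Matrix (Fin d) (Fin d) ℂ) (p : Fin d × Fin d) :
    matEuc d X p = X p.1 p.2 := rfl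

lemma matEuc_inner {d : ℕ} (X Y : Matrix (Fin d) (Fin d) ℂ) :
    ⟪matEuc d X, matEuc d Y⟫_ℂ = (Xᴴ * Y).trace := by
  simp only [PiLp.inner_apply, RCLike.inner_apply, matEuc_apply, Matrix.trace,
    Matrix.diag, Matrix.mul_apply, Matrix.conjTranspose_apply, Fintype.sum_prod_type]
  rw [Finset.sum_comm]; exact Finset.sum_congr rfl fun _ _ => Finset.sum_congr rfl fun _ _ => mul_comm _ _

set_option maxHeartbeats 2000000 in
/-- For an informationally complete POVM `(A_a)` on `ℂ^d` with nonzero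
effects and positive completeness stability `s(A)`, the scaled frame operator
`f(X) = ∑_a (Tr(A_a X)/Tr(A_a))·A_a` is bijective; its inverse `g` has real trace (as an
endomorphism of the `d²`-dimensional matrix space), with `Tr(g) ≤ (d² − 1)/s(A) + 1`. -/
theorem trace_inverse_scaled_frame_le {d : ℕ} {α : Type*} [Fintype α]
    (A : α → Matrix (Fin d) (Fin d) ℂ)
    (hpsd : ∀ a, (A a).PosSemidef) (hsum : ∑ a, A a = 1) (hne : ∀ a, A a ≠ 0)
    (hic : Submodule.span ℂ (Set.range A) = ⊤)
    (f : Matrix (Fin d) (Fin d) ℂ →ₗ[ℂ] Matrix (Fin d) (Fin d) ℂ)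
    (hf : ∀ X, f X = ∑ a, ((A a * X).trace / (A a).trace) • A a)
    (s : ℝ)
    (hs : s = sInf {r : ℝ | ∃ X : Matrix (Fin d) (Fin d) ℂ, (Xᴴ * X).trace = 1 ∧
        r = ∑ a, ‖(A a * X).trace‖ ^ 2 / ((A a).trace).re})
    (hspos : 0 < s) :
    Function.Bijective f ∧
    ∃ g : Matrix (Fin d) (Fin d) ℂ →ₗ[ℂ] Matrix (Fin d) (Fin d) ℂ,
      g.comp f = LinearMap.id ∧ f.comp g = LinearMap.id ∧
      (LinearMap.trace ℂ _ g).im = 0 ∧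
      (LinearMap.trace ℂ _ g).re ≤ ((d : ℝ) ^ 2 - 1) / s + 1 := by
  -- basic facts about traces of effects
  have htrace : ∀ a, ((A a).trace).im = 0 ∧ 0 < ((A a).trace).re := by
    intro a
    obtain ⟨B, hB⟩ : ∃ B : Matrix (Fin d) (Fin d) ℂ, A a = Bᴴ * B := by
      open scoped MatrixOrder in
      obtain ⟨B, hB⟩ := CStarAlgebra.nonneg_iff_eq_star_mul_self.mp (hpsd a).nonneg
      exact ⟨B, hB⟩
    have h1 : (A a).trace = ((∑ j, ∑ k, ‖B k j‖ ^ 2 : ℝ) : ℂ) := by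
      rw [hB]
      simp only [Matrix.trace, Matrix.diag, Matrix.mul_apply, Matrix.conjTranspose_apply]
      push_cast
      refine Finset.sum_congr rfl fun j _ => Finset.sum_congr rfl fun k _ => ?_
      rw [show ((‖B k j‖:ℝ)^2 : ℂ) = ((Complex.normSq (B k j) : ℝ) : ℂ) by
        rw [Complex.normSq_eq_norm_sq]; norm_cast, Complex.normSq_eq_conj_mul_self]
      rfl
    constructor
    · rw [h1]; exact Complex.ofReal_im _
    · rw [h1, Complex.ofReal_re]
      rcases (Finset.sum_nonneg fun j _ => Finset.sum_nonneg
        fun k _ => sq_nonneg ‖B k j‖ : (0:ℝ) ≤ ∑ j, ∑ k, ‖B k j‖ ^ 2).lt_or_eq with h | h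
      · exact h
      · exfalso
        apply hne a
        have hB0 : B = 0 := by
          ext k j
          have := (Finset.sum_eq_zero_iff_of_nonneg (fun j _ =>
            Finset.sum_nonneg fun k _ => sq_nonneg ‖B k j‖)).mp h.symm j (Finset.mem_univ j)
          have := (Finset.sum_eq_zero_iff_of_nonneg (fun k _ =>
            sq_nonneg ‖B k j‖)).mp this k (Finset.mem_univ k)
          simpa using pow_eq_zero_iff (n := 2) (by norm_num) |>.mp this
        rw [hB, hB0]; simp
  have htne : ∀ a, (A a).trace ≠ 0 := by
    intro a h
    have := (htrace a).2
    rw [h] at this; simp at this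
  have htreal : ∀ a, (A a).trace = (((A a).trace.re : ℝ) : ℂ) := by
    intro a; exact Complex.ext (by simp) (by simp [(htrace a).1])
  set e := matEuc d with he
  have hconj : ∀ (a : α) (X : Matrix (Fin d) (Fin d) ℂ),
      (starRingEnd ℂ) ((A a * X).trace) = (Xᴴ * A a).trace := by
    intro a X
    have : ((A a * X)ᴴ).trace = star ((A a * X).trace) := Matrix.trace_conjTranspose _
    rw [Matrix.conjTranspose_mul, (hpsd a).1.eq] at this
    exact this.symm
  -- the transported operator
  set F : EuclideanSpace ℂ (Fin d × Fin d) →ₗ[ℂ] EuclideanSpace ℂ (Fin d × Fin d) :=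
    e.conj f with hFdef
  have hFapp : ∀ X : Matrix (Fin d) (Fin d) ℂ, F (e X) = e (f X) := by
    intro X
    rw [hFdef, LinearEquiv.conj_apply_apply, e.symm_apply_apply]
  -- key trace identity
  have hkey : ∀ X Y : Matrix (Fin d) (Fin d) ℂ,
      (Xᴴ * f Y).trace
        = ∑ a, ((A a * Y).trace / (A a).trace) * (starRingEnd ℂ) ((A a * X).trace) := by
    intro X Y
    rw [hf, Finset.mul_sum, Matrix.trace_sum]
    refine Finset.sum_congr rfl fun a _ => ?_
    rw [Matrix.mul_smul, Matrix.trace_smul, smul_eq_mul, hconj]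
  have hsym : F.IsSymmetric := by
    intro x y
    have hx : x = e (e.symm x) := (e.apply_symm_apply x).symm
    have hy : y = e (e.symm y) := (e.apply_symm_apply y).symm
    rw [hx, hy, hFapp, hFapp, matEuc_inner, matEuc_inner, hkey]
    set X := e.symm x
    set Y := e.symm y
    rw [show ((f X)ᴴ * Y).trace = (starRingEnd ℂ) ((Yᴴ * f X).trace) by
      have h := Matrix.trace_conjTranspose (Yᴴ * f X)
      rw [Matrix.conjTranspose_mul, Matrix.conjTranspose_conjTranspose] at h
      simpa using h]
    rw [hkey, map_sum]
    refine Finset.sum_congr rfl fun a _ => ?_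
    have ht : (starRingEnd ℂ) ((A a).trace) = (A a).trace := by
      rw [htreal a]; simp
    simp only [_root_.map_mul, map_div₀, RingHomCompTriple.comp_apply, RingHom.id_apply,
      Complex.conj_conj, ht]
    ring
  -- the quadratic form
  have hquad : ∀ X : Matrix (Fin d) (Fin d) ℂ,
      (Xᴴ * f X).trace = ((∑ a, ‖(A a * X).trace‖ ^ 2 / ((A a).trace).re : ℝ) : ℂ) := by
    intro X
    rw [hkey]
    push_cast
    refine Finset.sum_congr rfl fun a _ => ?_
    rw [div_mul_eq_mul_div]
    congr 1
    · rw [Complex.mul_conj]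
      rw [show ((‖(A a * X).trace‖:ℝ)^2 : ℂ) = ((Complex.normSq ((A a * X).trace) : ℝ) : ℂ) by
        rw [Complex.normSq_eq_norm_sq]; norm_cast]
    · exact (htreal a).symm ▸ rfl
  have hd : 0 < d := by
    rcases Nat.eq_zero_or_pos d with h0 | h
    · exfalso
      subst h0
      have hempty : {r : ℝ | ∃ X : Matrix (Fin 0) (Fin 0) ℂ, (Xᴴ * X).trace = 1 ∧
          r = ∑ a, ‖(A a * X).trace‖ ^ 2 / ((A a).trace).re} = ∅ := by
        ext r
        simp only [Set.mem_setOf_eq, Set.mem_empty_iff_false, iff_false, not_exists]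
        rintro X ⟨h1, -⟩
        have : (Xᴴ * X).trace = 0 := by simp [Matrix.trace]
        rw [this] at h1
        exact one_ne_zero h1.symm
      rw [hempty, Real.sInf_empty] at hs
      exact absurd hspos (by rw [hs]; exact lt_irrefl 0)
    · exact h
  have hrank : Module.finrank ℂ (EuclideanSpace ℂ (Fin d × Fin d)) = d * d := by
    simp [finrank_euclideanSpace]
  set b := hsym.eigenvectorBasis hrank with hb
  set μ := hsym.eigenvalues hrank with hμdef
  have hbound : BddBelow {r : ℝ | ∃ X : Matrix (Fin d) (Fin d) ℂ, (Xᴴ * X).trace = 1 ∧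
      r = ∑ a, ‖(A a * X).trace‖ ^ 2 / ((A a).trace).re} := by
    refine ⟨0, ?_⟩
    rintro r ⟨X, -, rfl⟩
    exact Finset.sum_nonneg fun a _ => div_nonneg (sq_nonneg _) (le_of_lt (htrace a).2)
  have hμs : ∀ i, s ≤ μ i := by
    intro i
    set X := e.symm (b i) with hX
    have hXe : e X = b i := e.apply_symm_apply _
    have hin := matEuc_inner X X
    rw [← he, hXe] at hin
    have h1 : (Xᴴ * X).trace = 1 := by
      rw [← hin, inner_self_eq_norm_sq_to_K, b.orthonormal.1 i]
      norm_num
    have h2 : (μ i : ℂ) = ((∑ a, ‖(A a * X).trace‖ ^ 2 / ((A a).trace).re : ℝ) : ℂ) := by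
      have hb1 : F (b i) = (μ i : ℂ) • b i := hsym.apply_eigenvectorBasis hrank i
      have h3 : ⟪b i, F (b i)⟫_ℂ = (μ i : ℂ) := by
        rw [hb1, inner_smul_right, inner_self_eq_norm_sq_to_K, b.orthonormal.1 i]
        norm_num
      rw [← h3, ← hXe, hFapp]
      have h4 := matEuc_inner X (f X)
      rw [← he] at h4
      rw [h4, hquad]
    have h4 : μ i = ∑ a, ‖(A a * X).trace‖ ^ 2 / ((A a).trace).re := by exact_mod_cast h2
    rw [hs, h4]
    exact csInf_le hbound ⟨X, h1, rfl⟩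
  have hμpos : ∀ i, 0 < μ i := fun i => lt_of_lt_of_le hspos (hμs i)
  have hμne : ∀ i, ((μ i : ℝ) : ℂ) ≠ 0 := fun i => Complex.ofReal_ne_zero.mpr (hμpos i).ne'
  -- the identity matrix is an eigenvector with eigenvalue 1
  have hf1 : f 1 = 1 := by
    rw [hf, ← hsum]
    refine Finset.sum_congr rfl fun a _ => ?_
    rw [hsum, mul_one, div_self (htne a), one_smul]
  have hone : (1 : Matrix (Fin d) (Fin d) ℂ) ≠ 0 := by
    intro h
    have h2 := congrFun (congrFun h ⟨0, hd⟩) ⟨0, hd⟩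
    rw [Matrix.one_apply_eq] at h2
    exact one_ne_zero h2
  have hFv : F (e 1) = e 1 := by rw [hFapp, hf1]
  have hv : e 1 ≠ 0 := by
    intro h
    exact hone (by simpa using congrArg e.symm h)
  obtain ⟨i₀, hi₀⟩ : ∃ i, b.repr (e 1) i ≠ 0 := by
    by_contra hcon
    push_neg at hcon
    apply hv
    have h0 : b.repr (e 1) = 0 := PiLp.ext hcon
    have := congrArg b.repr.symm h0
    simpa using this
  have hμ1 : μ i₀ = 1 := by
    have h5 := hsym.eigenvectorBasis_apply_self_apply hrank (e 1) i₀
    rw [hFv] at h5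
    rcases mul_left_eq_self₀.mp h5.symm with h | h
    · simpa using h
    · exact absurd h hi₀
  -- the inverse operator
  set G : EuclideanSpace ℂ (Fin d × Fin d) →ₗ[ℂ] EuclideanSpace ℂ (Fin d × Fin d) :=
    b.toBasis.constr ℂ (fun i => ((μ i : ℂ))⁻¹ • b i) with hG
  have hGb : ∀ i, G (b i) = ((μ i : ℂ))⁻¹ • b i := by
    intro i
    have h9 := b.toBasis.constr_basis ℂ (fun i => ((μ i : ℂ))⁻¹ • b i) i
    rwa [show b.toBasis i = b i from by simp] at h9
  have hFb : ∀ i, F (b i) = (μ i : ℂ) • b i := fun i => hsym.apply_eigenvectorBasis hrank i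
  have hGF : G.comp F = LinearMap.id := by
    apply b.toBasis.ext
    intro i
    rw [show b.toBasis i = b i from by simp, LinearMap.comp_apply, hFb, _root_.map_smul, hGb,
      LinearMap.id_apply, smul_smul, mul_inv_cancel₀ (hμne i), one_smul]
  have hFG : F.comp G = LinearMap.id := by
    apply b.toBasis.ext
    intro i
    rw [show b.toBasis i = b i from by simp, LinearMap.comp_apply, hGb, _root_.map_smul, hFb,
      LinearMap.id_apply, smul_smul, inv_mul_cancel₀ (hμne i), one_smul]
  set g : Matrix (Fin d) (Fin d) ℂ →ₗ[ℂ] Matrix (Fin d) (Fin d) ℂ := e.symm.conj G with hg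
  have hgapp : ∀ X, g X = e.symm (G (e X)) := by
    intro X
    rw [hg, LinearEquiv.conj_apply_apply, e.symm_symm]
  have hgf : ∀ X, g (f X) = X := by
    intro X
    rw [hgapp, ← hFapp, ← LinearMap.comp_apply, hGF, LinearMap.id_apply, e.symm_apply_apply]
  have hfg : ∀ X, f (g X) = X := by
    intro X
    rw [hgapp]
    have h10 : e (f (e.symm (G (e X)))) = e X := by
      rw [← hFapp (e.symm (G (e X))), e.apply_symm_apply, ← LinearMap.comp_apply, hFG,
        LinearMap.id_apply]
    have := congrArg e.symm h10
    simpa using this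
  have htr : LinearMap.trace ℂ _ g = ((∑ i, (μ i)⁻¹ : ℝ) : ℂ) := by
    rw [hg, LinearMap.trace_conj', LinearMap.trace_eq_matrix_trace ℂ b.toBasis, Matrix.trace]
    push_cast
    refine Finset.sum_congr rfl fun i _ => ?_
    rw [Matrix.diag_apply, LinearMap.toMatrix_apply, show b.toBasis i = b i from by simp, hGb]
    simp [← OrthonormalBasis.coe_toBasis, Module.Basis.repr_self]
  refine ⟨Function.bijective_iff_has_inverse.mpr ⟨g, hgf, hfg⟩, g,
    LinearMap.ext hgf, LinearMap.ext hfg, by rw [htr]; exact Complex.ofReal_im _, ?_⟩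
  rw [htr, Complex.ofReal_re]
  have hcard : (Finset.univ.erase i₀).card = d * d - 1 := by
    rw [Finset.card_erase_of_mem (Finset.mem_univ i₀), Finset.card_univ, Fintype.card_fin]
  calc ∑ i, (μ i)⁻¹ = (μ i₀)⁻¹ + ∑ i ∈ Finset.univ.erase i₀, (μ i)⁻¹ :=
        (Finset.add_sum_erase _ _ (Finset.mem_univ i₀)).symm
    _ ≤ 1 + ((d * d - 1 : ℕ) : ℝ) * s⁻¹ := by
        refine add_le_add ?_ ?_
        · rw [hμ1]; norm_num
        · have h11 := Finset.sum_le_card_nsmul (Finset.univ.erase i₀) (fun i => (μ i)⁻¹) s⁻¹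
            (fun i _ => inv_anti₀ hspos (hμs i))
          rwa [hcard, nsmul_eq_mul] at h11
    _ = ((d : ℝ) ^ 2 - 1) / s + 1 := by
        have h12 : (1 : ℕ) ≤ d * d := Nat.one_le_iff_ne_zero.mpr (by positivity)
        rw [Nat.cast_sub h12, div_eq_mul_inv]
        push_cast
        ring
end
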